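/- arXiv:0901.3356 — 13 statements merged into one kernel-verified Lean document; each statement's English description precedes it below -/
import Mathlib

section
/- For every 2-coloring of the group ℤ² there exists an infinite monochromatic subset A ⊆ ℤ² that is symmetric, i.e., A = 2x - A for some point x ∈ ℤ². -/
/-!
If some centre `x` has infinitely many points `g` whose mirror image `2x - g` has the same colour,
pigeonhole gives infinitely many such points of one colour, and they form a symmetric set.
Otherwise the colouring is, outside a finite set, antisymmetric about `0` and (comparing the
reflections about `0` and about `t`) invariant under translation by `2t` for every `t`.
In `ℤ²` the translations by `(2, 0)` and `(0, 2)` carry `(x, 0)` around the finite exceptional set to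
`(-x, 0)`, contradicting antisymmetry; in `ℤ` there is no way around, and indeed the statement
fails there.
-/

open Filter Function

section Mirror

variable {G α : Type*} [AddCommGroup G]

def sameColorAsMirror (χ : G → α) (x : G) : Set G := {g | χ (2 • x - g) = χ g}

theorem exists_symmetric_monochromatic_of_infinite [Finite α] {χ : G → α} {x : G}
    (hx : (sameColorAsMirror χ x).Infinite) :
    ∃ A : Set G, A.Infinite ∧ (∃ c, ∀ a ∈ A, χ a = c) ∧ ∃ y : G, A = (fun a => 2 • y - a) '' A := by
  have hunion : sameColorAsMirror χ x = ⋃ c, {g | χ g = c ∧ χ (2 • x - g) = c} := by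
    ext g
    simp [sameColorAsMirror, eq_comm]
  obtain ⟨c, hc⟩ : ∃ c, {g | χ g = c ∧ χ (2 • x - g) = c}.Infinite := by
    by_contra! h
    exact hx (hunion ▸ Set.finite_iUnion h)
  refine ⟨_, hc, ⟨c, fun a ha => ha.1⟩, x, ?_⟩
  have hinv : Involutive fun a : G => 2 • x - a := sub_sub_cancel _
  rw [hinv.image_eq_preimage_symm]
  ext g
  simp [and_comm]

theorem eventually_mirror_ne {χ : G → α} {x : G} (hx : (sameColorAsMirror χ x).Finite) :
    ∀ᶠ g in cofinite, χ (2 • x - g) ≠ χ g :=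
  hx.eventually_cofinite_notMem

theorem eventually_add_two_nsmul_eq {χ : G → Fin 2} {t : G}
    (h₀ : (sameColorAsMirror χ 0).Finite) (ht : (sameColorAsMirror χ t).Finite) :
    ∀ᶠ g in cofinite, χ (g + 2 • t) = χ g := by
  have hneg := neg_injective.tendsto_cofinite.eventually (eventually_mirror_ne ht)
  filter_upwards [eventually_mirror_ne h₀, hneg] with g hg₀ hgt
  simp only [nsmul_zero, zero_sub, sub_neg_eq_add, add_comm (2 • t)] at hg₀ hgt
  omega

end Mirror

theorem eventually_cofinite_forall_snd {α β : Type*} {P : α × β → Prop}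
    (h : ∀ᶠ p in cofinite, P p) : ∀ᶠ a in cofinite, ∀ b, P (a, b) := by
  rw [← coprod_cofinite, Filter.coprod, eventually_sup, eventually_comap, eventually_comap] at h
  exact h.1.mono fun a ha b => ha (a, b) rfl

theorem eventually_cofinite_forall_fst {α β : Type*} {P : α × β → Prop}
    (h : ∀ᶠ p in cofinite, P p) : ∀ᶠ b in cofinite, ∀ a, P (a, b) := by
  rw [← coprod_cofinite, Filter.coprod, eventually_sup, eventually_comap, eventually_comap] at h
  exact h.2.mono fun b hb a => hb (a, b) rfl

theorem not_eventually_ne_neg_of_eventually_periodic {α : Type*} {χ : ℤ × ℤ → α}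
    (h₁ : ∀ᶠ g in cofinite, χ (g + (2, 0)) = χ g) (h₂ : ∀ᶠ g in cofinite, χ (g + (0, 2)) = χ g) :
    ¬ ∀ᶠ g in cofinite, χ (-g) ≠ χ g := by
  intro hanti
  have hrow : ∀ᶠ y in cofinite, Periodic (fun x => χ (x, y)) 2 :=
    (eventually_cofinite_forall_fst h₁).mono fun y hy x => by simpa using hy x
  have hcol : ∀ᶠ x in cofinite, Periodic (fun y => χ (x, y)) 2 :=
    (eventually_cofinite_forall_snd h₂).mono fun x hx y => by simpa using hx y
  have hcol' := neg_injective.tendsto_cofinite.eventually hcol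
  obtain ⟨x, hx, hx', hxanti⟩ :=
    (hcol.and (hcol'.and (eventually_cofinite_forall_snd hanti))).exists
  obtain ⟨m, hm⟩ :=
    ((mul_right_injective₀ (two_ne_zero (α := ℤ))).tendsto_cofinite.eventually hrow).exists
  have hup : χ (x, 2 * m) = χ (x, 0) := by simpa [mul_comm] using hx.int_mul m 0
  have hacross : χ (x, 2 * m) = χ (-x, 2 * m) := by
    simpa [mul_comm, show -x + x * 2 = x by ring] using hm.int_mul x (-x)
  have hdown : χ (-x, 2 * m) = χ (-x, 0) := by simpa [mul_comm] using hx'.int_mul m 0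
  exact hxanti 0 (by simpa using (hdown.symm.trans hacross.symm).trans hup)

/-- For every 2-coloring of ℤ² there exists an infinite monochromatic symmetric subset. -/
theorem stmt_0 (χ : ℤ × ℤ → Fin 2) :
    ∃ A : Set (ℤ × ℤ), A.Infinite ∧ (∃ c, ∀ a ∈ A, χ a = c) ∧
      (∃ x : ℤ × ℤ, A = (fun a => 2 • x - a) '' A) := by
  by_cases h : ∃ x, (sameColorAsMirror χ x).Infinite
  · obtain ⟨x, hx⟩ := h
    exact exists_symmetric_monochromatic_of_infinite hx
  · simp only [not_exists, Set.not_infinite] at h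
    refine absurd ?_ (not_eventually_ne_neg_of_eventually_periodic
      (eventually_add_two_nsmul_eq (h 0) (h (1, 0))) (eventually_add_two_nsmul_eq (h 0) (h (0, 1))))
    simpa using eventually_mirror_ne (h 0)
end

section
/- If r and n are natural numbers and G is an abelian group with |G| ≥ r²·n, then for every r-coloring of G there exists a monochromatic symmetric subset A ⊆ G with |A| ≥ n. -/
/-!
Write `symmetricPart B x` for the elements of `B` whose reflection `2 • x - a` about `x` is again
in `B`; it is symmetric about `x`. The key estimate is `#B ^ 2 ≤ ∑ₓ #(symmetricPart B x)`.
In a finite abelian group the right side counts triples `(a, b, x) ∈ B × B × G` with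
`a + b = 2 • x`: each `a + b` in `2G` is hit by `|ker (2 •)|` centres `x`, and `a + b ∈ 2G` iff `a`
and `b` lie in the same coset of `2G`, so Cauchy–Schwarz over the `|G ⧸ 2G| = |ker (2 •)|` cosets
gives the bound. In `ℤ` it holds for sets of integers of a single parity, with the centres ranging
over an interval containing them. Applied to the colour classes, Cauchy–Schwarz and averaging over
the `r` colours and `|G|` centres give a class and a centre with `#(symmetricPart B x) ≥ |G| / r²`.

A torsion group of cardinality at least `r²n` has a finite subgroup of that size (generated by any
`r²n` elements); otherwise it contains a copy of `ℤ`, where the colouring is refined by parity and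
the argument runs in the interval `[0, 4r²n]`.
-/

open Finset Function

universe u

theorem sq_card_le_card_mul_sum_card_filter_eq {α β : Type*} [Fintype β] [DecidableEq β]
    (s : Finset α) (f : α → β) :
    #s ^ 2 ≤ Fintype.card β * ∑ a ∈ s, #{b ∈ s | f a = f b} := by
  have hfib : ∑ a ∈ s, #{b ∈ s | f a = f b} = ∑ y, #{a ∈ s | f a = y} ^ 2 := by
    rw [← sum_fiberwise s f]
    refine sum_congr rfl fun y _ => ?_
    rw [sum_congr rfl fun a ha => by rw [(mem_filter.1 ha).2], sum_const, smul_eq_mul, sq]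
    simp_rw [eq_comm (a := y)]
  calc #s ^ 2 = (∑ y, #{a ∈ s | f a = y}) ^ 2 := by
        rw [card_eq_sum_card_fiberwise (t := univ) (fun _ _ => mem_univ (f _))]
    _ ≤ Fintype.card β * ∑ y, #{a ∈ s | f a = y} ^ 2 := sq_sum_le_card_mul_sum_sq
    _ = _ := by rw [hfib]

theorem AddMonoidHom.card_filter_eq_ite_mem_range {G H : Type*} [AddGroup G] [Fintype G]
    [AddGroup H] [DecidableEq H] (f : G →+ H) (z : H) :
    #{x | f x = z} = if z ∈ f.range then Nat.card f.ker else 0 := by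
  split_ifs with hz
  · rw [AddMonoidHom.card_fiber_eq_of_mem_range f (f.mem_range.1 hz) ⟨0, map_zero f⟩,
      Nat.card_eq_fintype_card, Fintype.card_subtype]
    simp only [mem_ker]
  · rw [card_eq_zero, filter_eq_empty_iff]
    exact fun x _ hx => hz ⟨x, hx⟩

section

variable {G : Type u} [AddCommGroup G]

def HasLargeMonochromaticSymmetricSet {r : ℕ} (χ : G → Fin r) (n : ℕ) : Prop :=
  ∃ A : Set G, (∃ c, ∀ a ∈ A, χ a = c) ∧
    (∃ x : G, A = (fun a => 2 • x - a) '' A) ∧ (n : Cardinal) ≤ Cardinal.mk A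

theorem HasLargeMonochromaticSymmetricSet.of_injective {H : Type u} [AddCommGroup H] {r n : ℕ}
    {χ : G → Fin r} (f : H →+ G) (hf : Injective f)
    (h : HasLargeMonochromaticSymmetricSet (χ ∘ f) n) :
    HasLargeMonochromaticSymmetricSet χ n := by
  obtain ⟨A, ⟨c, hc⟩, ⟨x, hx⟩, hn⟩ := h
  refine ⟨f '' A, ⟨c, ?_⟩, ⟨f x, ?_⟩, by rwa [Cardinal.mk_image_eq hf]⟩
  · rintro _ ⟨a, ha, rfl⟩
    exact hc a ha
  · conv_lhs => rw [hx]
    simp only [Set.image_image, map_sub, map_nsmul]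

theorem exists_addSubgroup_finite_le_card (hG : IsAddTorsion G) {m : ℕ}
    (hm : (m : Cardinal) ≤ Cardinal.mk G) : ∃ H : AddSubgroup G, Finite H ∧ m ≤ Nat.card H := by
  obtain ⟨S, hS⟩ := Cardinal.le_mk_iff_exists_set.1 hm
  have : Finite S := Cardinal.lt_aleph0_iff_finite.1 (hS ▸ Cardinal.natCast_lt_aleph0)
  have := AddCommGroup.finite_of_fg_isAddTorsion _ (hG.addSubgroup (AddSubgroup.closure S))
  refine ⟨AddSubgroup.closure S, inferInstance, ?_⟩
  calc m = Nat.card S := by exact_mod_cast (Nat.cast_card.trans hS).symm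
    _ ≤ Nat.card (AddSubgroup.closure S) :=
      Nat.card_mono (Set.toFinite _) AddSubgroup.subset_closure

section DecidableEq

variable [DecidableEq G]

def symmetricPart (B : Finset G) (x : G) : Finset G := {a ∈ B | 2 • x - a ∈ B}

theorem two_nsmul_sub_mem_symmetricPart {B : Finset G} {x a : G} (ha : a ∈ symmetricPart B x) :
    2 • x - a ∈ symmetricPart B x := by
  simp only [symmetricPart, mem_filter, sub_sub_cancel] at ha ⊢
  exact ⟨ha.2, ha.1⟩

theorem hasLargeMonochromaticSymmetricSet_of_symmetricPart {r n : ℕ} {χ : G → Fin r}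
    {B : Finset G} {c : Fin r} (hB : ∀ a ∈ B, χ a = c) {x : G}
    (hn : n ≤ #(symmetricPart B x)) : HasLargeMonochromaticSymmetricSet χ n := by
  refine ⟨symmetricPart B x, ⟨c, fun a ha => hB a (mem_filter.1 ha).1⟩, ⟨x, ?_⟩, by simpa using hn⟩
  refine Set.Subset.antisymm (fun a ha => ⟨2 • x - a, ?_, sub_sub_cancel _ _⟩) ?_
  · exact two_nsmul_sub_mem_symmetricPart ha
  · rintro _ ⟨a, ha, rfl⟩
    exact two_nsmul_sub_mem_symmetricPart ha

theorem exists_le_card_symmetricPart {ι : Type*} {s : Finset ι} {X : Finset G} {n : ℕ}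
    (B : ι → Finset G) (hs : s.Nonempty) (hX : X.Nonempty)
    (hB : ∀ i ∈ s, #(B i) ^ 2 ≤ ∑ x ∈ X, #(symmetricPart (B i) x))
    (hn : #s * (#s * #X * n) ≤ (∑ i ∈ s, #(B i)) ^ 2) :
    ∃ i ∈ s, ∃ x ∈ X, n ≤ #(symmetricPart (B i) x) := by
  have hsum : ∑ p ∈ s ×ˢ X, n ≤ ∑ p ∈ s ×ˢ X, #(symmetricPart (B p.1) p.2) := by
    refine le_of_mul_le_mul_left ?_ hs.card_pos
    calc #s * ∑ p ∈ s ×ˢ X, n = #s * (#s * #X * n) := by simp [card_product, mul_assoc]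
      _ ≤ (∑ i ∈ s, #(B i)) ^ 2 := hn
      _ ≤ #s * ∑ i ∈ s, #(B i) ^ 2 := sq_sum_le_card_mul_sum_sq
      _ ≤ #s * ∑ p ∈ s ×ˢ X, #(symmetricPart (B p.1) p.2) := by
        rw [sum_product]; gcongr with i hi; exact hB i hi
  obtain ⟨⟨i, x⟩, hix, hle⟩ := exists_le_of_sum_le (hs.product hX) hsum
  exact ⟨i, (mem_product.1 hix).1, x, (mem_product.1 hix).2, hle⟩

theorem sum_card_symmetricPart_eq [Fintype G] (B : Finset G) :
    ∑ x, #(symmetricPart B x) = ∑ a ∈ B, ∑ b ∈ B, #{x | 2 • x = a + b} := by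
  have hx (x : G) :
      #(symmetricPart B x) = ∑ a ∈ B, ∑ b ∈ B, if 2 • x = a + b then 1 else 0 := by
    rw [symmetricPart, card_filter]
    refine sum_congr rfl fun a _ => ?_
    simp_rw [← sub_eq_iff_eq_add', sum_ite_eq]
  simp_rw [hx, card_filter]
  rw [sum_comm]
  exact sum_congr rfl fun a _ => sum_comm

theorem sq_card_le_sum_card_symmetricPart [Fintype G] (B : Finset G) :
    #B ^ 2 ≤ ∑ x, #(symmetricPart B x) := by
  set φ : G →+ G := nsmulAddMonoidHom 2
  have hQ : Fintype.card (G ⧸ φ.range) = Nat.card φ.ker := by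
    rw [← Nat.card_eq_fintype_card, ← AddSubgroup.index_eq_card, AddSubgroup.index_range]
  set π : G → G ⧸ φ.range := QuotientAddGroup.mk
  have hmem (a b : G) : a + b ∈ φ.range ↔ π a = π b := by
    have h : a + b = φ a + (-a + b) := by simp [φ, two_nsmul]
    rw [QuotientAddGroup.eq, h, φ.range.add_mem_cancel_left ⟨a, rfl⟩]
  calc #B ^ 2 ≤ Fintype.card (G ⧸ φ.range) * ∑ a ∈ B, #{b ∈ B | π a = π b} :=
        sq_card_le_card_mul_sum_card_filter_eq B _
    _ = ∑ a ∈ B, ∑ b ∈ B, #{x | φ x = a + b} := by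
        simp_rw [φ.card_filter_eq_ite_mem_range, hmem, hQ, mul_sum, card_filter, mul_sum,
          mul_boole]
    _ = ∑ x, #(symmetricPart B x) := (sum_card_symmetricPart_eq B).symm

end DecidableEq

theorem hasLargeMonochromaticSymmetricSet_of_sq_mul_le_card [Fintype G] {r n : ℕ} (χ : G → Fin r)
    (hG : r ^ 2 * n ≤ Fintype.card G) : HasLargeMonochromaticSymmetricSet χ n := by
  classical
  have hn : #(univ : Finset (Fin r)) * (#(univ : Finset (Fin r)) * #(univ : Finset G) * n) ≤
      (∑ c, #{a | χ a = c}) ^ 2 := by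
    rw [← card_eq_sum_card_fiberwise (fun _ _ => mem_univ _), card_univ, card_univ,
      Fintype.card_fin]
    calc r * (r * Fintype.card G * n) = r ^ 2 * n * Fintype.card G := by ring
      _ ≤ Fintype.card G * Fintype.card G := Nat.mul_le_mul_right _ hG
      _ = _ := (sq _).symm
  obtain ⟨c, -, x, -, hx⟩ := exists_le_card_symmetricPart _ ⟨χ 0, mem_univ _⟩ univ_nonempty
    (fun c _ => sq_card_le_sum_card_symmetricPart _) hn
  exact hasLargeMonochromaticSymmetricSet_of_symmetricPart (fun a ha => (mem_filter.1 ha).2) hx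

end

theorem Int.sq_card_le_sum_card_symmetricPart {B : Finset ℤ} {lo hi : ℤ} (hB : B ⊆ Icc lo hi)
    (hpar : ∀ a ∈ B, ∀ b ∈ B, a % 2 = b % 2) :
    #B ^ 2 ≤ ∑ x ∈ Icc lo hi, #(symmetricPart B x) := by
  have hmid : ∀ p ∈ B ×ˢ B, (p.1 + p.2) / 2 ∈ Icc lo hi := by
    intro p hp
    obtain ⟨ha, hb⟩ := mem_product.1 hp
    have := mem_Icc.1 (hB ha); have := mem_Icc.1 (hB hb)
    rw [mem_Icc]; omega
  have hfiber {x : ℤ} {p : ℤ × ℤ} (hp : p ∈ {p ∈ B ×ˢ B | (p.1 + p.2) / 2 = x}) :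
      p.1 ∈ B ∧ p.2 ∈ B ∧ p.2 = 2 • x - p.1 := by
    obtain ⟨hp, hx⟩ := mem_filter.1 hp
    obtain ⟨ha, hb⟩ := mem_product.1 hp
    have := hpar _ ha _ hb
    refine ⟨ha, hb, ?_⟩
    rw [two_nsmul]; omega
  rw [sq, ← card_product, card_eq_sum_card_fiberwise hmid]
  refine sum_le_sum fun x _ => card_le_card_of_injOn Prod.fst (fun p hp => ?_) ?_
  · obtain ⟨ha, hb, hba⟩ := hfiber hp
    exact mem_filter.2 ⟨ha, hba ▸ hb⟩
  · intro p hp q hq hpq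
    obtain ⟨-, -, hp⟩ := hfiber hp
    obtain ⟨-, -, hq⟩ := hfiber hq
    exact Prod.ext hpq (by rw [hp, hq, hpq])

theorem Int.hasLargeMonochromaticSymmetricSet {r : ℕ} (χ : ℤ → Fin r) (n : ℕ) :
    HasLargeMonochromaticSymmetricSet χ n := by
  set L : ℕ := 4 * r ^ 2 * n
  set B : Fin r × ZMod 2 → Finset ℤ := fun i => {a ∈ Icc 0 (L : ℤ) | (χ a, (a : ZMod 2)) = i}
  have hB (i : Fin r × ZMod 2) : #(B i) ^ 2 ≤ ∑ x ∈ Icc 0 (L : ℤ), #(symmetricPart (B i) x) := by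
    refine Int.sq_card_le_sum_card_symmetricPart (filter_subset _ _) fun a ha b hb => ?_
    have hab : (a : ZMod 2) = b :=
      congrArg Prod.snd ((mem_filter.1 ha).2.trans (mem_filter.1 hb).2.symm)
    exact_mod_cast (ZMod.intCast_eq_intCast_iff' a b 2).1 hab
  have hn : #(univ : Finset (Fin r × ZMod 2)) * (#(univ : Finset (Fin r × ZMod 2)) *
      #(Icc 0 (L : ℤ)) * n) ≤ (∑ i, #(B i)) ^ 2 := by
    rw [← card_eq_sum_card_fiberwise (fun _ _ => mem_univ _), card_univ, Int.card_Icc,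
      Fintype.card_prod, Fintype.card_fin, ZMod.card, show (L + 1 - 0 : ℤ).toNat = L + 1 by omega]
    calc r * 2 * (r * 2 * (L + 1) * n) = L * (L + 1) := by ring
      _ ≤ (L + 1) ^ 2 := by nlinarith
  obtain ⟨i, -, x, -, hx⟩ := exists_le_card_symmetricPart B ⟨(χ 0, 0), mem_univ _⟩
    ⟨0, mem_Icc.2 ⟨le_rfl, by positivity⟩⟩ (fun i _ => hB i) hn
  exact hasLargeMonochromaticSymmetricSet_of_symmetricPart
    (fun a ha => congrArg Prod.fst (mem_filter.1 ha).2) hx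

/-- If |G| ≥ r²·n then every r-coloring of the abelian group G has a
monochromatic symmetric subset of size ≥ n. -/
theorem stmt_1 (r n : ℕ) (G : Type) [AddCommGroup G]
    (hG : ((r ^ 2 * n : ℕ) : Cardinal) ≤ Cardinal.mk G) (χ : G → Fin r) :
    ∃ A : Set G, (∃ c, ∀ a ∈ A, χ a = c) ∧
      (∃ x : G, A = (fun a => 2 • x - a) '' A) ∧ (n : Cardinal) ≤ Cardinal.mk A := by
  classical
  by_cases htors : IsAddTorsion G
  · obtain ⟨H, hHfin, hH⟩ := exists_addSubgroup_finite_le_card htors hG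
    have := Fintype.ofFinite H
    exact (hasLargeMonochromaticSymmetricSet_of_sq_mul_le_card (χ ∘ H.subtype)
      (Nat.card_eq_fintype_card (α := H) ▸ hH)).of_injective H.subtype H.subtype_injective
  · obtain ⟨g, hg⟩ := (not_isAddTorsion_iff G).1 htors
    exact (Int.hasLargeMonochromaticSymmetricSet (χ ∘ zmultiplesHom G g) n).of_injective _
      (injective_zsmul_iff_not_isOfFinAddOrder.2 hg)
end

section
/- For every finite coloring of an infinite abelian group G and every natural number n, there exists a monochromatic symmetric subset A ⊆ G with |A| ≥ n. -/
/-!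
If the 2-torsion `{a | 2 • a = 0}` is infinite, each of its points is its own reflection about `0`,
so any large monochromatic subset of it is symmetric. Otherwise doubling has finite kernel, so the
subgroup `2G` of doubles is infinite and contains arbitrarily large finite sets `F` with
`|F + F| ≤ 2|F|`: an arithmetic progression if `2G` has an element of infinite order, a finite
subgroup if `2G` is torsion. A colour class `C` of `F` has `|C| ≥ |F| / r`, so some `s ∈ F + F` is a
sum `a + b` with `a, b ∈ C` in at least `|C|² / (2|F|) ≥ n` ways. Since `s = 2 • x` for some `x`,
these points `a` together with their reflections `2 • x - a = b` form the required set.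
-/

open Finset Pointwise

variable {G : Type*} [AddCommGroup G]

lemma exists_monochromatic_symmetric_of_reflections {κ : Type*} (χ : G → κ) {n : ℕ} (c : κ)
    (x : G) (T : Finset G) (hT : n ≤ #T) (hrefl : ∀ a ∈ T, χ a = c ∧ χ (2 • x - a) = c) :
    ∃ A : Set G, (∃ c, ∀ a ∈ A, χ a = c) ∧
      (∃ x : G, A = (fun a => 2 • x - a) '' A) ∧ (n : Cardinal) ≤ Cardinal.mk A := by
  set σ : G → G := fun a => 2 • x - a
  have hσ : σ ∘ σ = id := by ext a; simp [σ]
  refine ⟨T ∪ σ '' T, ⟨c, ?_⟩, ⟨x, ?_⟩, ?_⟩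
  · rintro a (ha | ⟨b, hb, rfl⟩)
    exacts [(hrefl a ha).1, (hrefl b hb).2]
  · rw [Set.image_union, Set.image_image, ← Function.comp_def σ σ, hσ, Set.image_id, Set.union_comm]
  · calc (n : Cardinal) ≤ #T := mod_cast hT
      _ = Cardinal.mk (T : Set G) := Cardinal.mk_coe_finset.symm
      _ ≤ _ := Cardinal.mk_le_mk_of_subset Set.subset_union_left

lemma exists_monochromatic_reflections [DecidableEq G] {κ : Type*} [Fintype κ] (χ : G → κ)
    {F : Finset G} (hF : F.Nonempty) {n : ℕ} (hcard : 2 * Fintype.card κ ^ 2 * n ≤ #F)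
    (hdoubling : #(F + F) ≤ 2 * #F) :
    ∃ c, ∃ s ∈ F + F, ∃ T : Finset G, n ≤ #T ∧ ∀ a ∈ T, χ a = c ∧ χ (s - a) = c := by
  classical
  set k := Fintype.card κ
  have : Nonempty κ := ⟨χ hF.choose⟩
  have hk : 0 < k := Fintype.card_pos
  obtain ⟨c, -, hc⟩ := exists_le_card_fiber_of_nsmul_le_card_of_maps_to
    (fun a _ => mem_univ (χ a)) univ_nonempty (s := F) (b := (#F : ℚ) / k)
    (by rw [card_univ, nsmul_eq_mul]; field_simp; rfl)
  set C := {a ∈ F | χ a = c}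
  have hFC : #F ≤ k * #C := by
    rw [div_le_iff₀ (by positivity)] at hc
    exact_mod_cast (mul_comm (#C : ℚ) k ▸ hc)
  have hpairs : #(F + F) * n ≤ #(C ×ˢ C) := by
    rw [card_product]
    refine Nat.le_of_mul_le_mul_left ?_ (pow_pos hk 2)
    calc k ^ 2 * (#(F + F) * n) ≤ k ^ 2 * (2 * #F * n) := by gcongr
      _ = #F * (2 * k ^ 2 * n) := by ring
      _ ≤ #F * #F := by gcongr
      _ ≤ (k * #C) * (k * #C) := by gcongr
      _ = k ^ 2 * (#C * #C) := by ring
  obtain ⟨s, hs, hsn⟩ := exists_le_card_fiber_of_mul_le_card_of_maps_to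
    (f := fun p : G × G => p.1 + p.2)
    (fun p hp => add_mem_add (filter_subset _ _ (mem_product.1 hp).1)
      (filter_subset _ _ (mem_product.1 hp).2)) (hF.add hF) hpairs
  refine ⟨c, s, hs, {a ∈ C | s - a ∈ C}, hsn.trans ?_, fun a ha => ?_⟩
  · refine card_le_card_of_injOn Prod.fst (fun p hp => ?_) (fun p hp q hq hpq => ?_)
    · rw [mem_coe, mem_filter, mem_product] at hp
      obtain ⟨⟨hp₁, hp₂⟩, rfl⟩ := hp
      exact mem_filter.2 ⟨hp₁, by rwa [add_sub_cancel_left]⟩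
    · rw [mem_coe, mem_filter] at hp hq
      exact Prod.ext hpq (add_left_cancel (hp.2.trans (hpq ▸ hq.2).symm))
  · simp only [C, mem_filter] at ha
    exact ⟨ha.1.2, ha.2.2⟩

lemma exists_finset_card_add_self_le_of_not_isOfFinAddOrder [DecidableEq G] {d : G}
    (hd : ¬IsOfFinAddOrder d) (N : ℕ) :
    ∃ F : Finset G, F.Nonempty ∧ N ≤ #F ∧ #(F + F) ≤ 2 * #F := by
  have hinj : Function.Injective (· • d) := injective_nsmul_iff_not_isOfFinAddOrder.2 hd
  refine ⟨(range (N + 1)).image (· • d), by simp, ?_, ?_⟩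
  · rw [card_image_of_injective _ hinj, card_range]
    exact N.le_succ
  · have hsub : (range (N + 1)).image (· • d) + (range (N + 1)).image (· • d) ⊆
        (range (2 * N + 1)).image (· • d) := by
      simp only [add_subset_iff, mem_image, mem_range]
      rintro _ ⟨k, hk, rfl⟩ _ ⟨l, hl, rfl⟩
      exact ⟨k + l, by omega, add_nsmul d k l⟩
    calc _ ≤ #((range (2 * N + 1)).image (· • d)) := card_le_card hsub
      _ ≤ 2 * #((range (N + 1)).image (· • d)) := by
        rw [card_image_of_injective _ hinj, card_image_of_injective _ hinj, card_range,
          card_range]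
        omega

lemma exists_finset_card_add_self_le_of_isAddTorsion [DecidableEq G] [Infinite G]
    (hG : IsAddTorsion G) (N : ℕ) :
    ∃ F : Finset G, F.Nonempty ∧ N ≤ #F ∧ #(F + F) ≤ 2 * #F := by
  obtain ⟨S, hS⟩ := Infinite.exists_subset_card_eq G N
  set K := AddSubgroup.closure (S : Set G)
  have : Finite K := AddCommGroup.finite_of_fg_isAddTorsion K (hG.addSubgroup K)
  set F := (K : Set G).toFinite.toFinset
  have hF : ∀ a, a ∈ F ↔ a ∈ K := fun a => Set.Finite.mem_toFinset _
  refine ⟨F, ⟨0, (hF 0).2 K.zero_mem⟩, ?_, ?_⟩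
  · rw [← hS]
    exact card_le_card fun a ha => (hF a).2 (AddSubgroup.subset_closure ha)
  · have hFF : F + F ⊆ F := add_subset_iff.2 fun a ha b hb =>
      (hF _).2 (K.add_mem ((hF a).1 ha) ((hF b).1 hb))
    linarith [card_le_card hFF]

lemma exists_finset_card_add_self_le [DecidableEq G] [Infinite G] (N : ℕ) :
    ∃ F : Finset G, F.Nonempty ∧ N ≤ #F ∧ #(F + F) ≤ 2 * #F := by
  by_cases hG : IsAddTorsion G
  · exact exists_finset_card_add_self_le_of_isAddTorsion hG N
  · obtain ⟨d, hd⟩ := not_forall.1 hG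
    exact exists_finset_card_add_self_le_of_not_isOfFinAddOrder hd N

lemma AddMonoidHom.infinite_ker_or_infinite_range {H : Type*} [AddGroup H] [Infinite G]
    (f : G →+ H) : Infinite f.ker ∨ Infinite f.range := by
  by_contra! h
  obtain ⟨_, _⟩ := h
  have : Finite (G ⧸ f.ker) := .of_equiv _ (QuotientAddGroup.quotientKerEquivRange f).symm.toEquiv
  have := Finite.of_addSubgroup_quotient f.ker
  exact not_finite G

lemma AddSubgroup.exists_monochromatic_reflections {κ : Type*} [Fintype κ] (χ : G → κ)
    (H : AddSubgroup G) [Infinite H] (n : ℕ) :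
    ∃ c, ∃ s ∈ H, ∃ T : Finset G, n ≤ #T ∧ ∀ a ∈ T, χ a = c ∧ χ (s - a) = c := by
  classical
  obtain ⟨F, hF, hcard, hdoubling⟩ :=
    exists_finset_card_add_self_le (G := H) (2 * Fintype.card κ ^ 2 * n)
  have hinj : Function.Injective H.subtype := H.subtype_injective
  obtain ⟨c, s, hs, T, hT, hrefl⟩ := _root_.exists_monochromatic_reflections χ (hF.image H.subtype)
    (by rwa [card_image_of_injective _ hinj])
    (by rwa [← image_add, card_image_of_injective _ hinj, card_image_of_injective _ hinj])
  rw [← image_add] at hs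
  obtain ⟨t, -, rfl⟩ := mem_image.1 hs
  exact ⟨c, t, t.2, T, hT, hrefl⟩

lemma exists_monochromatic_symmetric_of_infinite_two_torsion {κ : Type*} [Fintype κ]
    (χ : G → κ) (h : {a : G | 2 • a = 0}.Infinite) (n : ℕ) :
    ∃ A : Set G, (∃ c, ∀ a ∈ A, χ a = c) ∧
      (∃ x : G, A = (fun a => 2 • x - a) '' A) ∧ (n : Cardinal) ≤ Cardinal.mk A := by
  classical
  have : Nonempty κ := ⟨χ 0⟩
  obtain ⟨T, hTs, hT⟩ := h.exists_subset_card_eq (Fintype.card κ * n)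
  obtain ⟨c, -, hc⟩ := exists_le_card_fiber_of_mul_le_card_of_maps_to
    (fun a _ => mem_univ (χ a)) univ_nonempty (s := T) (by rw [card_univ, hT])
  refine exists_monochromatic_symmetric_of_reflections χ c 0 _ hc fun a ha => ?_
  obtain ⟨haT, rfl⟩ := mem_filter.1 ha
  have hneg : -a = a := neg_eq_of_add_eq_zero_right (two_nsmul a ▸ hTs haT)
  simp [hneg]

/-- Every finite coloring of an infinite abelian group has monochromatic
symmetric subsets of arbitrarily large finite size. -/
theorem stmt_2 (G : Type) [AddCommGroup G] [Infinite G] (r : ℕ) (χ : G → Fin r) (n : ℕ) :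
    ∃ A : Set G, (∃ c, ∀ a ∈ A, χ a = c) ∧
      (∃ x : G, A = (fun a => 2 • x - a) '' A) ∧ (n : Cardinal) ≤ Cardinal.mk A := by
  rcases (nsmulAddMonoidHom 2 : G →+ G).infinite_ker_or_infinite_range with hker | hrange
  · exact exists_monochromatic_symmetric_of_infinite_two_torsion χ (Set.infinite_coe_iff.1 hker) n
  · obtain ⟨c, _, ⟨x, rfl⟩, T, hT, hrefl⟩ :=
      AddSubgroup.exists_monochromatic_reflections χ (nsmulAddMonoidHom 2 : G →+ G).range n
    exact exists_monochromatic_symmetric_of_reflections χ c x T hT hrefl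
end

section
/- Let G be an infinite abelian group, κ a cardinal with κ < |G|, H ⊆ G a subgroup with |H| ≤ κ, and χ : G → κ a coloring of G with at most κ colors. Then either G contains a monochromatic symmetric subset of cardinality ≥ κ, or there exists g ∈ G such that the set of colors appearing on 2H + g is disjoint from the set of colors appearing on 2H − g. -/
/-- Lemma 3.5: either G contains a monochromatic symmetric subset of size ≥ κ,
or some translate 2H+g and 2H−g get disjoint sets of colors. -/
theorem stmt_4 (G : Type) [AddCommGroup G] [Infinite G] (κ : Cardinal)
    (hκ : κ < Cardinal.mk G) (H : AddSubgroup G) (hH : Cardinal.mk H ≤ κ)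
    (C : Type) (hC : Cardinal.mk C ≤ κ) (χ : G → C) :
    (∃ A : Set G, (∃ c, ∀ a ∈ A, χ a = c) ∧
        (∃ x : G, A = (fun a => 2 • x - a) '' A) ∧ κ ≤ Cardinal.mk A) ∨
      (∃ g : G, (χ '' {y | ∃ h ∈ (H : Set G), y = 2 • h + g}) ∩
          (χ '' {y | ∃ h ∈ (H : Set G), y = 2 • h - g}) = ∅) := by
  by_cases hdisj : ∃ g : G, (χ '' {y | ∃ h ∈ (H : Set G), y = 2 • h + g}) ∩
      (χ '' {y | ∃ h ∈ (H : Set G), y = 2 • h - g}) = ∅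
  · exact Or.inr hdisj
  left
  push_neg at hdisj
  have hch : ∀ g : G, ∃ (h₁ : H) (h₂ : H),
      χ (2 • (h₁ : G) + g) = χ (2 • (h₂ : G) - g) := by
    intro g
    obtain ⟨c, ⟨y1, ⟨h1, hh1, hy1⟩, hc1⟩, ⟨y2, ⟨h2, hh2, hy2⟩, hc2⟩⟩ := hdisj g
    refine ⟨⟨h1, hh1⟩, ⟨h2, hh2⟩, ?_⟩
    simp only []
    rw [← hy1, ← hy2, hc1, hc2]
  choose h₁ h₂ hχ using hch
  set f : G → H × H × C := fun g => (h₁ g, h₂ g, χ (2 • ((h₁ g : G)) + g)) with hf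
  have hfiber : ∃ t, κ ≤ Cardinal.mk (f ⁻¹' {t}) := by
    by_contra hcon
    push_neg at hcon
    have h1 : Cardinal.mk G = Cardinal.sum (fun t => Cardinal.mk (f ⁻¹' {t})) := by
      rw [← Cardinal.mk_sigma]
      exact Cardinal.mk_congr (Equiv.sigmaFiberEquiv f).symm
    have h2 : Cardinal.sum (fun t => Cardinal.mk (f ⁻¹' {t}))
        ≤ Cardinal.mk (H × H × C) * κ := by
      calc Cardinal.sum (fun t => Cardinal.mk (f ⁻¹' {t}))
          ≤ Cardinal.sum (fun _ : H × H × C => κ) :=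
            Cardinal.sum_le_sum _ _ (fun t => (hcon t).le)
        _ = Cardinal.mk (H × H × C) * κ := Cardinal.sum_const' _ _
    have hinf : Cardinal.aleph0 ≤ Cardinal.mk G := Cardinal.infinite_iff.mp inferInstance
    have hH' : Cardinal.mk H < Cardinal.mk G := hH.trans_lt hκ
    have hC' : Cardinal.mk C < Cardinal.mk G := hC.trans_lt hκ
    have h3 : Cardinal.mk (H × H × C) * κ < Cardinal.mk G := by
      have e : Cardinal.mk (H × H × C) = Cardinal.mk H * (Cardinal.mk H * Cardinal.mk C) := by
        simp [Cardinal.mk_prod]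
      rw [e]
      exact Cardinal.mul_lt_of_lt hinf
        (Cardinal.mul_lt_of_lt hinf hH' (Cardinal.mul_lt_of_lt hinf hH' hC')) hκ
    exact absurd (h1 ▸ h2) (not_le.mpr h3)
  obtain ⟨⟨a, b, c⟩, hS⟩ := hfiber
  set S : Set G := f ⁻¹' {(a, b, c)} with hSdef
  have hmem : ∀ g ∈ S, h₁ g = a ∧ h₂ g = b ∧ χ (2 • ((h₁ g : G)) + g) = c := by
    intro g hg
    have hfg : f g = (a, b, c) := hg
    exact ⟨congrArg Prod.fst hfg, congrArg (Prod.fst ∘ Prod.snd) hfg,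
      congrArg (Prod.snd ∘ Prod.snd) hfg⟩
  refine ⟨(fun g => 2 • (a : G) + g) '' S ∪ (fun g => 2 • (b : G) - g) '' S,
    ⟨c, ?_⟩, ⟨(a : G) + (b : G), ?_⟩, ?_⟩
  · rintro x (⟨g, hg, rfl⟩ | ⟨g, hg, rfl⟩)
    · obtain ⟨ha, _, hc0⟩ := hmem g hg
      show χ (2 • (a : G) + g) = c
      rw [← ha]; exact hc0
    · obtain ⟨ha, hb, hc0⟩ := hmem g hg
      show χ (2 • (b : G) - g) = c
      rw [← hb, ← hχ g]; exact hc0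
  · have key1 : (fun y => 2 • ((a : G) + (b : G)) - y) '' ((fun g => 2 • (a : G) + g) '' S)
        = (fun g => 2 • (b : G) - g) '' S := by
      rw [Set.image_image]
      apply Set.image_congr'
      intro g
      abel
    have key2 : (fun y => 2 • ((a : G) + (b : G)) - y) '' ((fun g => 2 • (b : G) - g) '' S)
        = (fun g => 2 • (a : G) + g) '' S := by
      rw [Set.image_image]
      apply Set.image_congr'
      intro g
      abel
    rw [Set.image_union, key1, key2, Set.union_comm]
  · have hinj : Function.Injective (fun g : G => 2 • (a : G) + g) :=
      fun x y h => by simpa using h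
    calc κ ≤ Cardinal.mk S := hS
      _ = Cardinal.mk ((fun g => 2 • (a : G) + g) '' S) :=
          (Cardinal.mk_image_eq hinj).symm
      _ ≤ _ := Cardinal.mk_le_mk_of_subset Set.subset_union_left
end

section
/- For every uncountable abelian group G whose subgroup B(G) = {g ∈ G : 2g = 0} satisfies |B(G)| < |G|, there exists a 2-coloring of G admitting no monochromatic symmetric subset of cardinality |G|. -/
/-!
Enumerate `G` in order type `|G|` and let `S i` consist of the elements `g` with some `2 ^ n • g`
in the subgroup generated by the first `i` elements. Since the kernels of `g ↦ 2 ^ n • g` are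
small, every `S i` has cardinality `< |G|`. The level `v g = min {i | g ∈ S i}` satisfies
`v (a - b) ≤ max (v a) (v b)` and `v a ≤ v (2 • a)`. Call `a` and `b` equivalent when `a = b` or
`v (a - b) < v a`; negation is an involution on the classes, so they can be 2-coloured with each
class not fixed by negation coloured differently from its negative. If `v x < v a`, then
`2 • x - a` is equivalent to `-a`, which is not equivalent to `a` (that would force
`2 • a = 0`, so `v a ≤ v 0 ≤ v x`, or `v (2 • a) < v a`); hence a monochromatic set
symmetric about `x` lies in the small set `S (v x)`.
-/

open Cardinal Set

universe u

theorem exists_coloring_ne_of_involutive {α : Type*} {f : α → α} (hf : Function.Involutive f) :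
    ∃ c : α → Fin 2, ∀ a, f a ≠ a → c (f a) ≠ c a := by
  classical
  let _ := IsWellOrder.linearOrder (WellOrderingRel (α := α))
  refine ⟨fun a => if a ≤ f a then 0 else 1, fun a ha => ?_⟩
  rcases ha.lt_or_gt with h | h <;> simp [hf a, h.le, not_le.mpr h]

theorem AddSubgroup.cardinalMk_closure_le_max {G : Type u} [AddGroup G] (s : Set G) :
    #(closure s) ≤ max #s ℵ₀ := by
  rcases isEmpty_or_nonempty s with hs | hs
  · simp [Set.isEmpty_coe_sort.mp hs]
  · rw [FreeAddGroup.closure_eq_range, ← mk_freeAddGroup]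
    exact mk_le_of_surjective (FreeAddGroup.lift ((↑) : s → G)).rangeRestrict_surjective

theorem AddMonoidHom.cardinalMk_preimage_le_mul {G H : Type u} [AddGroup G] [AddGroup H]
    (f : G →+ H) (s : Set H) : #(f ⁻¹' s) ≤ #s * #f.ker := by
  refine mk_le_mk_mul_of_mk_preimage_le (fun g : f ⁻¹' s => (⟨f g, g.2⟩ : s)) fun b => ?_
  rcases isEmpty_or_nonempty ((fun g : f ⁻¹' s => (⟨f g, g.2⟩ : s)) ⁻¹' {b}) with _ | ⟨g₀, hg₀⟩
  · simp
  refine mk_le_of_injective (f := fun g => ⟨-g₀.1 + g.1.1, ?_⟩) fun g g' h => ?_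
  · have hg := congrArg Subtype.val g.2
    have hg₀ := congrArg Subtype.val hg₀
    simp_all [f.mem_ker]
  · simpa [Subtype.ext_iff] using h

section Saturation

variable {G : Type u} [AddCommGroup G]

theorem cardinalMk_ker_nsmul_pow_le (p k : ℕ) :
    #(nsmulAddMonoidHom (α := G) (p ^ k)).ker ≤ max ℵ₀ #(nsmulAddMonoidHom (α := G) p).ker := by
  induction k with
  | zero =>
    have : Subsingleton (nsmulAddMonoidHom (α := G) (p ^ 0)).ker :=
      ⟨fun a b => Subtype.ext <| by simpa [AddMonoidHom.mem_ker] using a.2.trans b.2.symm⟩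
    exact mk_le_aleph0.trans (le_max_left _ _)
  | succ k ih =>
    have hker : ((nsmulAddMonoidHom (α := G) (p ^ (k + 1))).ker : Set G) =
        nsmulAddMonoidHom p ⁻¹' (((nsmulAddMonoidHom (p ^ k)).ker : AddSubgroup G) : Set G) := by
      ext g; simp [AddMonoidHom.mem_ker, pow_succ, mul_smul]
    rw [← SetLike.coe_sort_coe, hker]
    calc _ ≤ _ := AddMonoidHom.cardinalMk_preimage_le_mul _ _
      _ ≤ max ℵ₀ #(nsmulAddMonoidHom (α := G) p).ker *
          max ℵ₀ #(nsmulAddMonoidHom (α := G) p).ker := mul_le_mul' ih (le_max_right _ _)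
      _ = _ := mul_eq_self (le_max_left _ _)

namespace AddSubgroup

def saturationPow (p : ℕ) (H : AddSubgroup G) : AddSubgroup G where
  carrier := {g | ∃ n : ℕ, p ^ n • g ∈ H}
  zero_mem' := ⟨0, by simp⟩
  add_mem' := by
    rintro g h ⟨m, hm⟩ ⟨n, hn⟩
    refine ⟨m + n, ?_⟩
    rw [smul_add, pow_add, mul_comm, mul_smul, mul_comm, mul_smul]
    exact H.add_mem (H.nsmul_mem hm _) (H.nsmul_mem hn _)
  neg_mem' := by
    rintro g ⟨n, hn⟩
    exact ⟨n, by simpa using hn⟩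

variable {p : ℕ} {H K : AddSubgroup G} {g : G}

theorem mem_saturationPow : g ∈ H.saturationPow p ↔ ∃ n : ℕ, p ^ n • g ∈ H := Iff.rfl

theorem le_saturationPow : H ≤ H.saturationPow p := fun _ hg => ⟨0, by simpa using hg⟩

theorem saturationPow_mono (hHK : H ≤ K) : H.saturationPow p ≤ K.saturationPow p :=
  fun _ ⟨n, hn⟩ => ⟨n, hHK hn⟩

theorem mem_saturationPow_of_nsmul_mem (h : p • g ∈ H.saturationPow p) :
    g ∈ H.saturationPow p := by
  obtain ⟨n, hn⟩ := h
  exact ⟨n + 1, by rwa [pow_succ, mul_smul]⟩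

theorem cardinalMk_saturationPow_lt {κ : Cardinal} (hκ : ℵ₀ < κ) (hH : #H < κ)
    (hker : #(nsmulAddMonoidHom (α := G) p).ker < κ) : #(H.saturationPow p) < κ := by
  have hunion : (H.saturationPow p : Set G) =
      ⋃ n : ULift.{u} ℕ, nsmulAddMonoidHom (p ^ n.down) ⁻¹' (H : Set G) := by
    ext g; simp [mem_saturationPow]
  rw [← SetLike.coe_sort_coe, hunion]
  calc _ ≤ #(ULift.{u} ℕ) *
          ⨆ n : ULift.{u} ℕ, #(nsmulAddMonoidHom (α := G) (p ^ n.down) ⁻¹' (H : Set G)) :=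
        mk_iUnion_le _
    _ ≤ ℵ₀ * (#H * max ℵ₀ #(nsmulAddMonoidHom (α := G) p).ker) := by
        rw [mk_eq_aleph0]
        refine mul_le_mul' le_rfl (ciSup_le' fun n => ?_)
        exact (AddMonoidHom.cardinalMk_preimage_le_mul _ _).trans
          (mul_le_mul' le_rfl (cardinalMk_ker_nsmul_pow_le p n.down))
    _ < κ := mul_lt_of_lt hκ.le hκ (mul_lt_of_lt hκ.le hH (max_lt hκ hker))

end AddSubgroup

end Saturation

section Ultrametric

variable {G : Type*} [AddCommGroup G] {ι : Type*} [LinearOrder ι]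

def IsUltrametric (v : G → ι) : Prop := ∀ a b, v (a - b) ≤ max (v a) (v b)

namespace IsUltrametric

variable {v : G → ι}

theorem apply_zero_le (hv : IsUltrametric v) (a : G) : v 0 ≤ v a := by
  simpa using hv a a

theorem apply_neg (hv : IsUltrametric v) (a : G) : v (-a) = v a := by
  have hle : ∀ b : G, v (-b) ≤ v b := fun b => by
    simpa [max_eq_right (hv.apply_zero_le b)] using hv 0 b
  exact le_antisymm (hle a) (by simpa using hle (-a))

theorem apply_eq_of_apply_sub_lt (hv : IsUltrametric v) {a b : G} (h : v (a - b) < v a) : v b = v a := by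
  have hb : v b ≤ max (v a) (v (a - b)) := by simpa using hv a (a - b)
  have ha : v a ≤ max (v b) (v (b - a)) := by simpa using hv b (b - a)
  rw [← neg_sub, hv.apply_neg] at ha
  apply le_antisymm
  · simpa [h.le] using hb
  · simpa [h.not_ge] using ha

theorem exists_coloring_ne_reflect (hv : IsUltrametric v) (hv2 : ∀ a, v a ≤ v (2 • a)) :
    ∃ χ : G → Fin 2, ∀ x a, v x < v a → χ (2 • x - a) ≠ χ a := by
  have hneg := hv.apply_neg
  let s : Setoid G :=
    { r := fun a b => a = b ∨ v (a - b) < v a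
      iseqv := by
        refine ⟨fun a => Or.inl rfl, ?_, ?_⟩
        · rintro a b (rfl | h)
          · exact Or.inl rfl
          · right; rwa [← neg_sub, hneg, hv.apply_eq_of_apply_sub_lt h]
        · rintro a b c (rfl | hab) (rfl | hbc)
          · exact Or.inl rfl
          · exact Or.inr hbc
          · exact Or.inr hab
          · right
            rw [← sub_add_sub_cancel a b c, ← sub_neg_eq_add]
            refine (hv _ _).trans_lt (max_lt hab ?_)
            rwa [hneg, ← hv.apply_eq_of_apply_sub_lt hab] }
  let ν : Quotient s → Quotient s := Quotient.map Neg.neg <| by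
    rintro a b (rfl | h)
    · exact Or.inl rfl
    · right; rwa [neg_sub_neg, ← neg_sub, hneg, hneg]
  have hν : Function.Involutive ν := by
    rintro ⟨a⟩; exact congrArg (Quotient.mk s) (neg_neg a)
  obtain ⟨c, hc⟩ := exists_coloring_ne_of_involutive hν
  refine ⟨fun a => c (Quotient.mk s a), fun x a hxa => ?_⟩
  have hv2x : v (2 • x) < v a := by
    refine lt_of_le_of_lt ?_ hxa
    simpa [two_nsmul, hneg] using hv x (-x)
  have hreflect : Quotient.mk s (2 • x - a) = ν (Quotient.mk s a) :=
    (Quotient.sound (Or.inr (by rwa [show -a - (2 • x - a) = -(2 • x) by abel, hneg, hneg]))).symm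
  have hmoved : ν (Quotient.mk s a) ≠ Quotient.mk s a := by
    intro h
    rcases Quotient.exact h with h | h
    · have h2a : 2 • a = 0 := by rw [two_nsmul, ← neg_eq_iff_add_eq_zero, h]
      have := (hv2 a).trans_eq (congrArg v h2a)
      exact (this.trans (hv.apply_zero_le x)).not_gt hxa
    · rw [show -a - a = -(2 • a) by abel, hneg, hneg] at h
      exact (hv2 a).not_gt h
  change c (Quotient.mk s (2 • x - a)) ≠ c (Quotient.mk s a)
  rw [hreflect]
  exact hc _ hmoved

end IsUltrametric

end Ultrametric

theorem exists_coloring_ne_reflect_of_filtration {G : Type*} [AddCommGroup G] {ι : Type*}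
    [LinearOrder ι] [WellFoundedLT ι] {S : ι → AddSubgroup G} (hmono : Monotone S)
    (hexh : ∀ g, ∃ i, g ∈ S i) (hhalf : ∀ i g, 2 • g ∈ S i → g ∈ S i) :
    ∃ χ : G → Fin 2, ∀ i x a, x ∈ S i → a ∉ S i → χ (2 • x - a) ≠ χ a := by
  have wf : WellFounded ((· < ·) : ι → ι → Prop) := wellFounded_lt
  let v g := wf.min {i | g ∈ S i} (hexh g)
  have hmem : ∀ g, g ∈ S (v g) := fun g => wf.min_mem _ (hexh g)
  have hle : ∀ g i, g ∈ S i ↔ v g ≤ i :=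
    fun g i => ⟨fun h => wf.min_le h, fun h => hmono h (hmem g)⟩
  have hv : IsUltrametric v := fun a b => (hle _ _).1 <|
    sub_mem ((hle a (max (v a) (v b))).2 (le_max_left _ _)) ((hle b _).2 (le_max_right _ _))
  obtain ⟨χ, hχ⟩ := hv.exists_coloring_ne_reflect fun a => (hle _ _).1 <| hhalf _ _ (hmem _)
  refine ⟨χ, fun i x a hx ha => hχ x a ?_⟩
  rw [hle] at hx ha
  exact hx.trans_lt (not_le.mp ha)

theorem mk_Iic_toType_ord_lt {c : Cardinal} (hc : ℵ₀ ≤ c) (i : c.ord.ToType) : #(Iic i) < c := by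
  rw [← Iio_insert]
  exact mk_insert_le.trans_lt
    (add_lt_of_lt hc (by simpa using mk_Iio_lt i) (one_lt_aleph0.trans_le hc))

/-- For every uncountable abelian group G with |B(G)| < |G| there is a 2-coloring
of G with no monochromatic symmetric subset of cardinality |G|. -/
theorem stmt_6 (G : Type) [AddCommGroup G] [Uncountable G]
    (hB : Cardinal.mk {g : G // 2 • g = 0} < Cardinal.mk G) :
    ∃ χ : G → Fin 2, ∀ A : Set G, (∃ c, ∀ a ∈ A, χ a = c) →
      (∃ x : G, A = (fun a => 2 • x - a) '' A) → Cardinal.mk A < Cardinal.mk G := by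
  have hκ : ℵ₀ < #G := aleph0_lt_mk
  obtain ⟨e⟩ : Nonempty ((#G).ord.ToType ≃ G) := by rw [← Cardinal.eq, mk_toType, card_ord]
  let S i := (AddSubgroup.closure (e '' Iic i)).saturationPow 2
  have hS_lt : ∀ i, #(S i) < #G := fun i =>
    AddSubgroup.cardinalMk_saturationPow_lt hκ ((AddSubgroup.cardinalMk_closure_le_max _).trans_lt
      (max_lt (mk_image_le.trans_lt (mk_Iic_toType_ord_lt hκ.le i)) hκ)) hB
  have hS_self : ∀ g, g ∈ S (e.symm g) := fun g => AddSubgroup.le_saturationPow <|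
    AddSubgroup.subset_closure ⟨_, mem_Iic.mpr le_rfl, e.apply_symm_apply g⟩
  obtain ⟨χ, hχ⟩ := exists_coloring_ne_reflect_of_filtration (S := S)
    (fun _ _ hij => AddSubgroup.saturationPow_mono <|
      AddSubgroup.closure_mono <| image_mono <| Iic_subset_Iic.mpr hij)
    (fun g => ⟨_, hS_self g⟩) (fun _ _ => AddSubgroup.mem_saturationPow_of_nsmul_mem)
  refine ⟨χ, fun A ⟨c, hc⟩ ⟨x, hx⟩ => ?_⟩
  have hA : A ⊆ S (e.symm x) := fun a ha => by
    by_contra haS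
    have hreflect : 2 • x - a ∈ A := by rw [hx]; exact mem_image_of_mem _ ha
    exact hχ _ x a (hS_self x) haS ((hc _ hreflect).trans (hc a ha).symm)
  exact (mk_le_mk_of_subset hA).trans_lt (hS_lt _)
end

section
/- There exists a finite coloring of the group ℤ × ℤ (specifically, a 3-coloring) such that ℤ² contains no infinite monochromatic symmetric subset; moreover 2 colors do not suffice. That is, ν(ℤ²) = 3. -/
/-!
Three colors suffice: split `ℤ²` into three pointed cones, each carrying an integer linear
functional `f` that dominates the sup norm on it. If `a` and `2x - a` share a cone then
`f a + f (2x - a) = f (2x)` with both terms nonnegative, so `‖a‖ ≤ f (2x)`, and a monochromatic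
set symmetric about `x` is bounded.

Two colors do not: if every `χ`-monochromatic set symmetric about any center is finite, then for
each `x` only finitely many `d` have `χ (x + d) = χ (x - d)`. With two colors this makes
`y ↦ χ (2y)` invariant under every translation up to a finite set, and since `ℤ²` has one end such
a function is constant, say `c`, off a finite set; the points `2y` with `χ (2y) = χ (-2y) = c`
then form an infinite monochromatic set symmetric about `0`.
-/

open Function Set

def HasInfiniteMonochromaticSymmetricSet {G ι : Type*} [AddCommGroup G] (χ : G → ι) : Prop :=
  ∃ A : Set G, A.Infinite ∧ (∃ c, ∀ a ∈ A, χ a = c) ∧ ∃ x : G, A = (fun a => 2 • x - a) '' A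

section General

variable {G ι : Type*} [AddCommGroup G]

lemma two_nsmul_sub_mem_of_eq_image {A : Set G} {x a : G}
    (hA : A = (fun a => 2 • x - a) '' A) (ha : a ∈ A) : 2 • x - a ∈ A := by
  rw [hA]
  exact ⟨a, ha, rfl⟩

lemma hasInfiniteMonochromaticSymmetricSet_of_infinite (χ : G → ι) (x : G) (c : ι)
    (h : {d | χ (x + d) = c ∧ χ (x - d) = c}.Infinite) :
    HasInfiniteMonochromaticSymmetricSet χ := by
  set D := {d | χ (x + d) = c ∧ χ (x - d) = c}
  have hneg : ∀ d ∈ D, -d ∈ D := fun d ⟨h₁, h₂⟩ => by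
    simpa only [D, mem_ofPred_eq, sub_neg_eq_add, ← sub_eq_add_neg] using And.intro h₂ h₁
  refine ⟨(x + ·) '' D, h.image (add_right_injective x).injOn, ⟨c, ?_⟩, x, ?_⟩
  · rintro _ ⟨d, hd, rfl⟩
    exact hd.1
  · ext a
    constructor
    · rintro ⟨d, hd, rfl⟩
      exact ⟨x + -d, ⟨-d, hneg d hd, rfl⟩, by dsimp only; abel⟩
    · rintro ⟨_, ⟨d, hd, rfl⟩, rfl⟩
      exact ⟨-d, hneg d hd, by dsimp only; abel⟩

lemma finite_setOf_apply_add_eq_apply_sub [Finite ι] {χ : G → ι}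
    (h : ¬ HasInfiniteMonochromaticSymmetricSet χ) (x : G) :
    {d | χ (x + d) = χ (x - d)}.Finite := by
  have hfin : ∀ c, {d | χ (x + d) = c ∧ χ (x - d) = c}.Finite := fun c =>
    not_infinite.mp fun hinf => h (hasInfiniteMonochromaticSymmetricSet_of_infinite χ x c hinf)
  exact (finite_iUnion hfin).subset fun d hd => mem_iUnion.mpr ⟨χ (x + d), rfl, hd.symm⟩

/-- With two colors, `χ b ≠ χ (b + 2t)` forces `χ (-b)` to equal one of them, so
`χ (0 + b) = χ (0 - b)` or `χ (t + d) = χ (t - d)` for `d = b + t`. -/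
lemma finite_setOf_apply_ne_apply_add_two_nsmul {χ : G → Fin 2}
    (h : ¬ HasInfiniteMonochromaticSymmetricSet χ) (t : G) :
    {b | χ b ≠ χ (b + 2 • t)}.Finite := by
  refine ((finite_setOf_apply_add_eq_apply_sub h 0).union
    ((finite_setOf_apply_add_eq_apply_sub h t).preimage (add_left_injective t).injOn)).subset ?_
  intro b hb
  simp only [mem_ofPred_eq, zero_add, zero_sub, mem_union, mem_preimage] at hb ⊢
  rw [show t + (b + t) = b + 2 • t by rw [two_nsmul]; abel, show t - (b + t) = -b by abel]
  omega

end General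

lemma finite_of_eq_image_of_abs_le {A : Set (ℤ × ℤ)} {x : ℤ × ℤ}
    (hA : A = (fun a => 2 • x - a) '' A) (p q : ℤ)
    (h : ∀ a ∈ A, |a.1| ≤ p * a.1 + q * a.2 ∧ |a.2| ≤ p * a.1 + q * a.2) : A.Finite := by
  set M := p * (2 • x).1 + q * (2 • x).2
  refine (finite_Icc (-M, -M) (M, M)).subset fun a ha => ?_
  obtain ⟨ha₁, ha₂⟩ := h a ha
  have hb := (h _ (two_nsmul_sub_mem_of_eq_image hA ha)).1
  simp only [Prod.fst_sub, Prod.snd_sub] at hb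
  have hb₀ := (abs_nonneg _).trans hb
  rw [abs_le] at ha₁ ha₂
  simp only [mem_Icc, Prod.le_def]
  refine ⟨⟨?_, ?_⟩, ?_, ?_⟩ <;> linarith

lemma not_hasInfiniteMonochromaticSymmetricSet_of_abs_le {ι : Type*} (χ : ℤ × ℤ → ι)
    (w : ι → ℤ × ℤ) (hw : ∀ v, |v.1| ≤ (w (χ v)).1 * v.1 + (w (χ v)).2 * v.2 ∧
      |v.2| ≤ (w (χ v)).1 * v.1 + (w (χ v)).2 * v.2) :
    ¬ HasInfiniteMonochromaticSymmetricSet χ := by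
  rintro ⟨A, hinf, ⟨c, hc⟩, x, hA⟩
  refine hinf (finite_of_eq_image_of_abs_le hA (w c).1 (w c).2 fun a ha => ?_)
  simpa only [hc a ha] using hw a

/-- The cones of angles `[0°, 90°]`, `(90°, 225°]` and `(225°, 360°)`. -/
def coneColoring (v : ℤ × ℤ) : Fin 3 :=
  if 0 ≤ v.1 ∧ 0 ≤ v.2 then 0 else if v.1 < 0 ∧ v.1 ≤ v.2 then 1 else 2

def coneWeight : Fin 3 → ℤ × ℤ := ![(1, 1), (-2, 1), (1, -2)]

lemma abs_le_coneWeight (v : ℤ × ℤ) :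
    |v.1| ≤ (coneWeight (coneColoring v)).1 * v.1 + (coneWeight (coneColoring v)).2 * v.2 ∧
      |v.2| ≤ (coneWeight (coneColoring v)).1 * v.1 + (coneWeight (coneColoring v)).2 * v.2 := by
  obtain ⟨a, b⟩ := v
  simp only [coneColoring, abs_le]
  split_ifs <;> simp only [coneWeight, Matrix.cons_val] <;> omega

lemma exists_finite_setOf_ne_of_finite_setOf_ne_add {α : Type*} (k : ℤ × ℤ → α)
    (h₁ : {y | k y ≠ k (y + (1, 0))}.Finite) (h₂ : {y | k y ≠ k (y + (0, 1))}.Finite) :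
    ∃ c, {y | k y ≠ c}.Finite := by
  obtain ⟨N, hN⟩ := ((h₁.union h₂).image fun y => |y.1| ⊔ |y.2|).bddAbove
  have hbound : ∀ y, (k y ≠ k (y + (1, 0)) ∨ k y ≠ k (y + (0, 1))) → |y.1| ≤ N ∧ |y.2| ≤ N :=
    fun y hy => sup_le_iff.mp (hN ⟨y, hy, rfl⟩)
  have hrow : ∀ b, N < |b| → ∀ a, k (a, b) = k (0, b) := fun b hb a => by
    have hper : Periodic (fun a => k (a, b)) 1 := fun a => by
      by_contra hne
      exact hb.not_ge (hbound (a, b) (Or.inl (by simpa using Ne.symm hne))).2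
    simpa using hper.int_mul a 0
  have hcol : ∀ a, N < |a| → ∀ b, k (a, b) = k (a, 0) := fun a ha b => by
    have hper : Periodic (fun b => k (a, b)) 1 := fun b => by
      by_contra hne
      exact ha.not_ge (hbound (a, b) (Or.inr (by simpa using Ne.symm hne))).1
    simpa using hper.int_mul b 0
  set M := |N| + 1
  have hM : N < |M| := by rw [abs_of_pos (by positivity)]; linarith [le_abs_self N]
  refine ⟨k (M, M), (finite_Icc (-N, -N) (N, N)).subset fun y hy => ?_⟩
  obtain ⟨a, b⟩ := y
  by_contra hout
  simp only [mem_Icc, Prod.mk_le_mk, not_and_or, not_le] at hout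
  have hfar : N < |a| ∨ N < |b| := by
    simp only [lt_abs]
    omega
  apply hy
  rcases hfar with ha | hb
  · rw [hcol a ha, ← hcol a ha M, hrow M hM, ← hrow M hM M]
  · rw [hrow b hb, ← hrow b hb M, hcol M hM, ← hcol M hM M]

lemma hasInfiniteMonochromaticSymmetricSet_of_fin_two (χ : ℤ × ℤ → Fin 2) :
    HasInfiniteMonochromaticSymmetricSet χ := by
  by_contra h
  have hinj : Injective fun y : ℤ × ℤ => 2 • y := nsmul_right_injective two_ne_zero
  have hk : ∀ t, {y | χ (2 • y) ≠ χ (2 • (y + t))}.Finite := fun t => by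
    simpa only [preimage_ofPred_eq, smul_add] using
      (finite_setOf_apply_ne_apply_add_two_nsmul h t).preimage hinj.injOn
  obtain ⟨c, hc⟩ := exists_finite_setOf_ne_of_finite_setOf_ne_add _ (hk _) (hk _)
  have hpairs : {d | χ (0 + d) = c ∧ χ (0 - d) = c}.Infinite := by
    refine ((hc.union (hc.preimage neg_injective.injOn)).infinite_compl.image hinj.injOn).mono ?_
    rintro _ ⟨y, hy, rfl⟩
    simp only [mem_compl_iff, mem_union, mem_preimage, mem_ofPred_eq, not_or, not_not] at hy
    simpa only [mem_ofPred_eq, zero_add, zero_sub, ← smul_neg] using hy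
  exact h (hasInfiniteMonochromaticSymmetricSet_of_infinite χ 0 c hpairs)

/-- ν(ℤ²) = 3 : some 3-coloring of ℤ² has no infinite monochromatic symmetric
subset, while every 2-coloring has one. -/
theorem stmt_7 :
    (∃ χ : ℤ × ℤ → Fin 3, ¬ ∃ A : Set (ℤ × ℤ), A.Infinite ∧ (∃ c, ∀ a ∈ A, χ a = c) ∧
        (∃ x : ℤ × ℤ, A = (fun a => 2 • x - a) '' A)) ∧
    (∀ χ : ℤ × ℤ → Fin 2, ∃ A : Set (ℤ × ℤ), A.Infinite ∧ (∃ c, ∀ a ∈ A, χ a = c) ∧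
        (∃ x : ℤ × ℤ, A = (fun a => 2 • x - a) '' A)) :=
  ⟨⟨coneColoring, not_hasInfiniteMonochromaticSymmetricSet_of_abs_le coneColoring coneWeight
      abs_le_coneWeight⟩,
    hasInfiniteMonochromaticSymmetricSet_of_fin_two⟩
end

section
/- Every central subset of ℤ² contains a triangle, i.e., a 3-element affinely independent subset of ℤ² ⊆ ℝ². -/
/-- A subset E ⊆ ℤ² is central if every 2-coloring of ℤ² admits an infinite
monochromatic subset symmetric with respect to some point of E. -/
def IsCentral (E : Set (ℤ × ℤ)) : Prop :=
  ∀ χ : ℤ × ℤ → Fin 2, ∃ x ∈ E, ∃ A : Set (ℤ × ℤ), A.Infinite ∧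
    (∃ c, ∀ a ∈ A, χ a = c) ∧ A = (fun a => 2 • x - a) '' A

private lemma exists_triangle_of_cross (E : Set (ℤ × ℤ)) (p q r : ℤ × ℤ)
    (hp : p ∈ E) (hq : q ∈ E) (hr : r ∈ E)
    (hc : (q.1 - p.1) * (r.2 - p.2) ≠ (q.2 - p.2) * (r.1 - p.1)) :
    ∃ T : Finset (ℤ × ℤ), ↑T ⊆ E ∧ T.card = 3 ∧
      AffineIndependent ℝ (fun p : T => (((p : ℤ × ℤ).1 : ℝ), ((p : ℤ × ℤ).2 : ℝ))) := by
  classical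
  have hpq : p ≠ q := by rintro rfl; exact hc (by ring)
  have hpr : p ≠ r := by rintro rfl; exact hc (by ring)
  have hqr : q ≠ r := by rintro rfl; exact hc (by ring)
  refine ⟨{p, q, r}, ?_, ?_, ?_⟩
  · intro z hz
    simp only [Finset.coe_insert, Finset.coe_singleton, Set.mem_insert_iff,
      Set.mem_singleton_iff] at hz
    rcases hz with rfl | rfl | rfl <;> assumption
  · exact Finset.card_eq_three.mpr ⟨p, q, r, hpq, hpr, hqr, rfl⟩
  · set e : ℤ × ℤ → ℝ × ℝ := fun z => ((z.1 : ℝ), (z.2 : ℝ)) with he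
    have hind : AffineIndependent ℝ (e ∘ ![p, q, r]) := by
      rw [affineIndependent_iff_not_collinear]
      intro hco
      have hmem : e p ∈ Set.range (e ∘ ![p, q, r]) := ⟨0, rfl⟩
      rw [collinear_iff_of_mem hmem] at hco
      obtain ⟨v, hv⟩ := hco
      obtain ⟨tq, htq⟩ := hv (e q) ⟨1, rfl⟩
      obtain ⟨tr, htr⟩ := hv (e r) ⟨2, rfl⟩
      have h1 : (q.1 : ℝ) - p.1 = tq * v.1 := by
        have := congrArg Prod.fst htq
        simp [he, Prod.ext_iff] at this
        linarith
      have h2 : (q.2 : ℝ) - p.2 = tq * v.2 := by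
        have := congrArg Prod.snd htq
        simp [he, Prod.ext_iff] at this
        linarith
      have h3 : (r.1 : ℝ) - p.1 = tr * v.1 := by
        have := congrArg Prod.fst htr
        simp [he, Prod.ext_iff] at this
        linarith
      have h4 : (r.2 : ℝ) - p.2 = tr * v.2 := by
        have := congrArg Prod.snd htr
        simp [he, Prod.ext_iff] at this
        linarith
      apply hc
      have : ((q.1 : ℝ) - p.1) * ((r.2 : ℝ) - p.2) = ((q.2 : ℝ) - p.2) * ((r.1 : ℝ) - p.1) := by
        rw [h1, h2, h3, h4]; ring
      exact_mod_cast this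
    have hmemT : ∀ t : ℤ × ℤ, t ∈ ({p, q, r} : Finset (ℤ × ℤ)) → t = p ∨ t = q ∨ t = r := by
      intro t ht
      simpa [Finset.mem_insert, Finset.mem_singleton] using ht
    set emb : ({p, q, r} : Finset (ℤ × ℤ)) → Fin 3 :=
      fun t => if (t : ℤ × ℤ) = p then 0 else if (t : ℤ × ℤ) = q then 1 else 2 with hembd
    have hev : ∀ t : ({p, q, r} : Finset (ℤ × ℤ)), ![p, q, r] (emb t) = (t : ℤ × ℤ) := by
      rintro ⟨t, ht⟩
      rcases hmemT t ht with h | h | h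
      · simp [hembd, h]
      · simp [hembd, h, (Ne.symm hpq : q ≠ p)]
      · simp [hembd, h, (Ne.symm hpr : r ≠ p), (Ne.symm hqr : r ≠ q)]
    have hinj : Function.Injective emb := by
      intro t1 t2 h12
      apply Subtype.ext
      rw [← hev t1, ← hev t2, h12]
    have key := hind.comp_embedding ⟨emb, hinj⟩
    convert key using 1
    funext t
    simp [Function.comp, he, hev t]


private lemma not_central_of_collinear (E : Set (ℤ × ℤ)) (hE : IsCentral E)
    (hcol : ∀ p ∈ E, ∀ q ∈ E, ∀ r ∈ E,
      (q.1 - p.1) * (r.2 - p.2) = (q.2 - p.2) * (r.1 - p.1)) : False := by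
  classical
  rcases Set.eq_empty_or_nonempty E with rfl | ⟨p₀, hp₀⟩
  · obtain ⟨x, hx, -⟩ := hE fun _ => 0
    exact hx
  obtain ⟨a, b, hab, hline⟩ : ∃ a b : ℤ, (a ≠ 0 ∨ b ≠ 0) ∧
      ∀ q ∈ E, a * (q.1 - p₀.1) + b * (q.2 - p₀.2) = 0 := by
    by_cases hone : ∀ q ∈ E, q = p₀
    · exact ⟨1, 0, Or.inl one_ne_zero, fun q hq => by rw [hone q hq]; ring⟩
    · push_neg at hone
      obtain ⟨p₁, hp₁, hne⟩ := hone
      refine ⟨-(p₁.2 - p₀.2), p₁.1 - p₀.1, ?_, ?_⟩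
      · by_contra h
        push_neg at h
        exact hne (Prod.ext (by omega) (by omega))
      · intro q hq
        have h := hcol p₀ hp₀ p₁ hp₁ q hq
        linear_combination h
  set f : ℤ × ℤ → ℤ := fun z => a * z.1 + b * z.2 with hf
  set g : ℤ × ℤ → ℤ := fun z => b * z.1 - a * z.2 with hg
  set c : ℤ := f p₀ with hcdef
  have hfE : ∀ q ∈ E, f q = c := by
    intro q hq
    have h := hline q hq
    simp only [hf, hcdef]
    linarith
  set χ : ℤ × ℤ → Fin 2 :=
    fun z => if c < f z ∨ (f z = c ∧ 0 < g z) then 1 else 0 with hχ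
  obtain ⟨x, hxE, A, hAinf, ⟨cc, hmono⟩, hsym⟩ := hE χ
  have hfx : f x = c := hfE x hxE
  have hpart : ∀ p ∈ A, (2 • x - p) ∈ A := by
    intro p hp
    rw [hsym]
    exact ⟨p, hp, rfl⟩
  have hcomp1 : ∀ p : ℤ × ℤ, (2 • x - p).1 = 2 * x.1 - p.1 := by
    intro p; simp [Prod.fst_sub]
  have hcomp2 : ∀ p : ℤ × ℤ, (2 • x - p).2 = 2 * x.2 - p.2 := by
    intro p; simp [Prod.snd_sub]
  have hfpart : ∀ p : ℤ × ℤ, f (2 • x - p) = 2 * c - f p := by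
    intro p
    simp only [hf, hcomp1, hcomp2]
    have : a * x.1 + b * x.2 = c := hfx
    linarith
  have hgpart : ∀ p : ℤ × ℤ, g (2 • x - p) = 2 * g x - g p := by
    intro p
    simp only [hg, hcomp1, hcomp2]
    ring
  have hfA : ∀ p ∈ A, f p = c := by
    intro p hp
    have hq := hpart p hp
    have h1 := hmono p hp
    have h2 := hmono _ hq
    by_contra hne
    rcases lt_or_gt_of_ne hne with hlt | hgt
    · have e1 : χ p = 0 := by
        simp only [hχ]
        exact if_neg (by rintro (h | ⟨h, -⟩) <;> omega)
      have e2 : χ (2 • x - p) = 1 := by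
        simp only [hχ]
        exact if_pos (Or.inl (by rw [hfpart]; omega))
      rw [e1] at h1; rw [e2] at h2; rw [← h1] at h2
      exact absurd h2 (by decide)
    · have e1 : χ p = 1 := by
        simp only [hχ]
        exact if_pos (Or.inl hgt)
      have e2 : χ (2 • x - p) = 0 := by
        simp only [hχ]
        exact if_neg (by rw [hfpart]; rintro (h | ⟨h, -⟩) <;> omega)
      rw [e1] at h1; rw [e2] at h2; rw [← h1] at h2
      exact absurd h2 (by decide)
  have hbound : ∀ p ∈ A, min (2 * g x) 0 ≤ g p ∧ g p ≤ max (2 * g x) 0 := by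
    intro p hp
    have hq := hpart p hp
    have h1 := hmono p hp
    have h2 := hmono _ hq
    have hfp' : f p = c := hfA p hp
    have hfq' : f (2 • x - p) = c := hfA _ hq
    have e1 : χ p = if 0 < g p then 1 else 0 := by
      simp [hχ, hfp', lt_irrefl]
    have e2 : χ (2 • x - p) = if 0 < 2 * g x - g p then 1 else 0 := by
      simp only [hχ]
      rw [hfq', hgpart]
      simp [lt_irrefl]
    by_cases u1 : 0 < g p <;> by_cases u2 : 0 < 2 * g x - g p
    · omega
    · exfalso
      rw [e1, if_pos u1] at h1; rw [e2, if_neg u2] at h2; rw [← h1] at h2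
      exact absurd h2 (by decide)
    · exfalso
      rw [e1, if_neg u1] at h1; rw [e2, if_pos u2] at h2; rw [← h1] at h2
      exact absurd h2 (by decide)
    · omega
  have hinj : Function.Injective (fun z : ℤ × ℤ => (f z, g z)) := by
    intro z w hzw
    simp only [Prod.mk.injEq, hf, hg] at hzw
    obtain ⟨h1, h2⟩ := hzw
    have k1 : (a * a + b * b) * (z.1 - w.1) = 0 := by linear_combination a * h1 + b * h2
    have k2 : (a * a + b * b) * (z.2 - w.2) = 0 := by linear_combination b * h1 - a * h2
    have hpos : 0 < a * a + b * b := by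
      rcases hab with h | h
      · linarith [mul_self_pos.mpr h, mul_self_nonneg b]
      · linarith [mul_self_pos.mpr h, mul_self_nonneg a]
    have z1 : z.1 = w.1 := by
      rcases mul_eq_zero.mp k1 with h | h
      · omega
      · omega
    have z2 : z.2 = w.2 := by
      rcases mul_eq_zero.mp k2 with h | h
      · omega
      · omega
    exact Prod.ext z1 z2
  have hAfin : A.Finite := by
    have hsubA : A ⊆ (fun z : ℤ × ℤ => (f z, g z)) ⁻¹'
        (({c} : Set ℤ) ×ˢ Set.Icc (min (2 * g x) 0) (max (2 * g x) 0)) := by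
      intro p hp
      simp only [Set.mem_preimage, Set.mem_prod, Set.mem_singleton_iff, Set.mem_Icc]
      exact ⟨hfA p hp, (hbound p hp).1, (hbound p hp).2⟩
    exact Set.Finite.subset
      (Set.Finite.preimage hinj.injOn
        ((Set.finite_singleton c).prod (Set.finite_Icc _ _))) hsubA
  exact hAinf hAfin


/-- Every central subset of ℤ² contains a triangle (a 3-element affinely
independent subset). -/
theorem stmt_9 (E : Set (ℤ × ℤ)) (hE : IsCentral E) :
    ∃ T : Finset (ℤ × ℤ), ↑T ⊆ E ∧ T.card = 3 ∧
      AffineIndependent ℝ (fun p : T => (((p : ℤ × ℤ).1 : ℝ), ((p : ℤ × ℤ).2 : ℝ))) := by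
  by_contra hT
  apply not_central_of_collinear E hE
  intro p hp q hq r hr
  by_contra hc
  exact hT (exists_triangle_of_cross E p q r hp hq hr hc)
end

section
/- Every triangle (3-element affinely independent subset) in ℤ² is a central subset of ℤ²: for every 2-coloring of ℤ² there is an infinite monochromatic subset symmetric with respect to one of the three vertices of the triangle. -/
private lemma fin2_trans {a b c : Fin 2} (h1 : a ≠ b) (h2 : b ≠ c) : a = c := by
  have ha := a.isLt; have hb := b.isLt; have hc := c.isLt
  simp only [Ne, Fin.ext_iff] at *
  omega

private lemma chain_eq (χ : ℤ × ℤ → Fin 2) (g : ℕ → ℤ × ℤ) :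
    ∀ n : ℕ, (∀ i, i < n → χ (g (i + 1)) = χ (g i)) → χ (g n) = χ (g 0) := by
  intro n
  induction n with
  | zero => intro _; rfl
  | succ n ih =>
      intro h
      rw [h n (by omega)]
      exact ih fun i hi => h i (by omega)

private lemma build (χ : ℤ × ℤ → Fin 2) (x : ℤ × ℤ)
    (h : {a : ℤ × ℤ | χ (2 • x - a) = χ a}.Infinite) :
    ∃ A : Set (ℤ × ℤ), A.Infinite ∧ (∃ c, ∀ a ∈ A, χ a = c) ∧
      A = (fun a => 2 • x - a) '' A := by
  have hsplit : {a : ℤ × ℤ | χ (2 • x - a) = χ a} =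
      {a : ℤ × ℤ | χ (2 • x - a) = χ a ∧ χ a = 0} ∪
      {a : ℤ × ℤ | χ (2 • x - a) = χ a ∧ χ a = 1} := by
    ext a
    simp only [Set.mem_setOf_eq, Set.mem_union]
    constructor
    · intro hh
      have h2 := (χ a).isLt
      have : χ a = 0 ∨ χ a = 1 := by
        simp only [Fin.ext_iff, Fin.val_zero, Fin.val_one]; omega
      rcases this with h' | h'
      · exact Or.inl ⟨hh, h'⟩
      · exact Or.inr ⟨hh, h'⟩
    · rintro (⟨h1, _⟩ | ⟨h1, _⟩) <;> exact h1
  rw [hsplit] at h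
  have hone : {a : ℤ × ℤ | χ (2 • x - a) = χ a ∧ χ a = 0}.Infinite ∨
      {a : ℤ × ℤ | χ (2 • x - a) = χ a ∧ χ a = 1}.Infinite := by
    by_contra hc
    rw [not_or, Set.not_infinite, Set.not_infinite] at hc
    exact (Set.not_infinite.mpr (hc.1.union hc.2)) h
  obtain ⟨c, hc⟩ : ∃ c : Fin 2, {a : ℤ × ℤ | χ (2 • x - a) = χ a ∧ χ a = c}.Infinite := by
    rcases hone with h' | h'
    exacts [⟨0, h'⟩, ⟨1, h'⟩]
  refine ⟨{a : ℤ × ℤ | χ (2 • x - a) = χ a ∧ χ a = c}, hc, ⟨c, fun a ha => ha.2⟩, ?_⟩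
  ext b
  simp only [Set.mem_setOf_eq, Set.mem_image]
  constructor
  · intro hb
    refine ⟨2 • x - b, ⟨?_, ?_⟩, by abel⟩
    · rw [show 2 • x - (2 • x - b) = b from by abel]
      exact hb.1.symm
    · exact hb.1.trans hb.2
  · rintro ⟨a, ⟨ha1, ha2⟩, rfl⟩
    constructor
    · rw [show 2 • x - (2 • x - a) = a from by abel]
      exact ha1.symm
    · exact ha1.trans ha2

private lemma key (χ : ℤ × ℤ → Fin 2) (x y z v w : ℤ × ℤ)
    (hv : v = 2 • y - 2 • x) (hw : w = 2 • z - 2 • x)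
    (hvw : ∀ j i : ℤ, j • v + i • w = 0 → j = 0 ∧ i = 0)
    (hx : {a : ℤ × ℤ | χ (2 • x - a) = χ a}.Finite)
    (hy : {a : ℤ × ℤ | χ (2 • y - a) = χ a}.Finite)
    (hz : {a : ℤ × ℤ | χ (2 • z - a) = χ a}.Finite) : False := by
  classical
  set Bx := {a : ℤ × ℤ | χ (2 • x - a) = χ a} with hBx
  set By := {a : ℤ × ℤ | χ (2 • y - a) = χ a} with hBy
  set Bz := {a : ℤ × ℤ | χ (2 • z - a) = χ a} with hBz
  have step_v : ∀ p : ℤ × ℤ, p ∉ Bx → 2 • x - p ∉ By → χ (p + v) = χ p := by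
    intro p hp hq
    have h1 : χ (2 • x - p) ≠ χ p := hp
    have h2 : χ (2 • y - (2 • x - p)) ≠ χ (2 • x - p) := hq
    have he : 2 • y - (2 • x - p) = p + v := by rw [hv]; abel
    rw [he] at h2
    exact fin2_trans h2 h1
  have step_w : ∀ p : ℤ × ℤ, p ∉ Bx → 2 • x - p ∉ Bz → χ (p + w) = χ p := by
    intro p hp hq
    have h1 : χ (2 • x - p) ≠ χ p := hp
    have h2 : χ (2 • z - (2 • x - p)) ≠ χ (2 • x - p) := hq
    have he : 2 • z - (2 • x - p) = p + w := by rw [hw]; abel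
    rw [he] at h2
    exact fin2_trans h2 h1
  set S : Set (ℤ × ℤ) := Bx ∪ (fun b => 2 • x - b) '' By ∪ (fun b => 2 • x - b) '' Bz
    with hSdef
  have hS : S.Finite := (hx.union (hy.image _)).union (hz.image _)
  set φ : ℤ × ℤ → ℤ × ℤ := fun q => x + q.1 • v + q.2 • w with hφ
  have hφinj : Function.Injective φ := by
    intro p q hpq
    have h1 := congrArg Prod.fst hpq
    have h2 := congrArg Prod.snd hpq
    simp only [hφ, Prod.fst_add, Prod.snd_add, Prod.smul_fst, Prod.smul_snd,
      smul_eq_mul] at h1 h2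
    have h0 : (p.1 - q.1) • v + (p.2 - q.2) • w = 0 := by
      have e1 : ((p.1 - q.1) • v + (p.2 - q.2) • w).1 = 0 := by
        simp only [Prod.fst_add, Prod.smul_fst, smul_eq_mul]
        nlinarith [h1]
      have e2 : ((p.1 - q.1) • v + (p.2 - q.2) • w).2 = 0 := by
        simp only [Prod.snd_add, Prod.smul_snd, smul_eq_mul]
        nlinarith [h2]
      exact Prod.ext e1 e2
    obtain ⟨e1, e2⟩ := hvw _ _ h0
    exact Prod.ext (by omega) (by omega)
  have hP : (φ ⁻¹' S).Finite := hS.preimage hφinj.injOn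
  have cast_inj : Function.Injective (fun n : ℕ => (n : ℤ)) := fun a b h => by
    simpa using h
  have ncast_inj : Function.Injective (fun n : ℕ => -(n : ℤ)) := fun a b h => by
    simpa using h
  -- choose K
  have hKfin : {n : ℕ | ((n : ℤ) ∈ Prod.snd '' (φ ⁻¹' S))}.Finite :=
    (hP.image Prod.snd).preimage cast_inj.injOn
  obtain ⟨K, hK⟩ := hKfin.infinite_compl.nonempty
  have hK' : (K : ℤ) ∉ Prod.snd '' (φ ⁻¹' S) := hK
  -- choose N
  have hNfin : ({n : ℕ | ((n : ℤ) ∈ Prod.fst '' (φ ⁻¹' S))} ∪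
      {n : ℕ | (-(n : ℤ) ∈ Prod.fst '' (φ ⁻¹' S))}).Finite :=
    ((hP.image Prod.fst).preimage cast_inj.injOn).union
      ((hP.image Prod.fst).preimage ncast_inj.injOn)
  obtain ⟨N, hN⟩ := hNfin.infinite_compl.nonempty
  have hN1 : (N : ℤ) ∉ Prod.fst '' (φ ⁻¹' S) := fun hmem => hN (Or.inl hmem)
  have hN2 : (-(N : ℤ)) ∉ Prod.fst '' (φ ⁻¹' S) := fun hmem => hN (Or.inr hmem)
  -- points on the good column/row avoid S
  have hnotS : ∀ q : ℤ × ℤ, (q.2 = (K : ℤ) ∨ q.1 = (N : ℤ) ∨ q.1 = -(N : ℤ)) →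
      φ q ∉ S := by
    intro q hq hmem
    rcases hq with h | h | h
    · exact hK' ⟨q, hmem, h⟩
    · exact hN1 ⟨q, hmem, h⟩
    · exact hN2 ⟨q, hmem, h⟩
  have notBx : ∀ q : ℤ × ℤ, φ q ∉ S → φ q ∉ Bx := fun q h hb => h (Or.inl (Or.inl hb))
  have notBy : ∀ q : ℤ × ℤ, φ q ∉ S → 2 • x - φ q ∉ By := by
    intro q h hb
    refine h (Or.inl (Or.inr ⟨2 • x - φ q, hb, ?_⟩))
    show 2 • x - (2 • x - φ q) = φ q
    abel
  have notBz : ∀ q : ℤ × ℤ, φ q ∉ S → 2 • x - φ q ∉ Bz := by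
    intro q h hb
    refine h (Or.inr ⟨2 • x - φ q, hb, ?_⟩)
    show 2 • x - (2 • x - φ q) = φ q
    abel
  -- vertical chains
  have hcol : ∀ j : ℤ, (j = (N : ℤ) ∨ j = -(N : ℤ)) → ∀ n : ℕ,
      χ (φ (j, (n : ℤ))) = χ (φ (j, 0)) := by
    intro j hj n
    have hc := chain_eq χ (fun i : ℕ => φ (j, (i : ℤ))) n ?_
    · simpa using hc
    · intro i _
      have hnot : φ (j, (i : ℤ)) ∉ S := hnotS _ (Or.inr hj)
      have hstep := step_w _ (notBx _ hnot) (notBz _ hnot)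
      have heq : φ (j, (i : ℤ)) + w = φ (j, ((i + 1 : ℕ) : ℤ)) := by
        simp only [hφ]
        push_cast
        simp only [add_smul, one_smul]
        abel
      rwa [heq] at hstep
  -- horizontal chain
  have hrow : ∀ n : ℕ, χ (φ (-(N : ℤ) + (n : ℤ), (K : ℤ))) = χ (φ (-(N : ℤ), (K : ℤ))) := by
    intro n
    have hc := chain_eq χ (fun t : ℕ => φ (-(N : ℤ) + (t : ℤ), (K : ℤ))) n ?_
    · simpa using hc
    · intro t _
      have hnot : φ (-(N : ℤ) + (t : ℤ), (K : ℤ)) ∉ S := hnotS _ (Or.inl rfl)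
      have hstep := step_v _ (notBx _ hnot) (notBy _ hnot)
      have heq : φ (-(N : ℤ) + (t : ℤ), (K : ℤ)) + v
          = φ (-(N : ℤ) + ((t + 1 : ℕ) : ℤ), (K : ℤ)) := by
        simp only [hφ]
        push_cast
        simp only [add_smul, one_smul]
        abel
      rwa [heq] at hstep
  -- assemble
  have e1 : χ (φ ((N : ℤ), (K : ℤ))) = χ (φ ((N : ℤ), 0)) := hcol _ (Or.inl rfl) K
  have e3 : χ (φ (-(N : ℤ), (K : ℤ))) = χ (φ (-(N : ℤ), 0)) := hcol _ (Or.inr rfl) K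
  have e2 : χ (φ ((N : ℤ), (K : ℤ))) = χ (φ (-(N : ℤ), (K : ℤ))) := by
    have := hrow (2 * N)
    rw [show (-(N : ℤ) + ((2 * N : ℕ) : ℤ)) = (N : ℤ) from by push_cast; ring] at this
    exact this
  have echain : χ (φ ((N : ℤ), 0)) = χ (φ (-(N : ℤ), 0)) := by
    rw [← e1, e2, e3]
  have hrefl : 2 • x - φ ((N : ℤ), 0) = φ (-(N : ℤ), 0) := by
    show 2 • x - (x + (N : ℤ) • v + (0 : ℤ) • w) = x + (-(N : ℤ)) • v + (0 : ℤ) • w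
    rw [neg_smul, zero_smul]
    abel
  have hnb : φ ((N : ℤ), 0) ∉ Bx := notBx _ (hnotS _ (Or.inr (Or.inl rfl)))
  apply hnb
  show χ (2 • x - φ ((N : ℤ), 0)) = χ (φ ((N : ℤ), 0))
  rw [hrefl]
  exact echain.symm

/-- Every triangle in ℤ² is central: for any 2-coloring of ℤ² some infinite
monochromatic subset is symmetric with respect to one of its three vertices. -/
theorem stmt_10 (T : Finset (ℤ × ℤ)) (hcard : T.card = 3)
    (hT : AffineIndependent ℝ (fun p : T => (((p : ℤ × ℤ).1 : ℝ), ((p : ℤ × ℤ).2 : ℝ))))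
    (χ : ℤ × ℤ → Fin 2) :
    ∃ x ∈ T, ∃ A : Set (ℤ × ℤ), A.Infinite ∧ (∃ c, ∀ a ∈ A, χ a = c) ∧
      A = (fun a => 2 • x - a) '' A := by
  classical
  obtain ⟨x, y, z, hxy, hxz, hyz, hTxyz⟩ := Finset.card_eq_three.mp hcard
  have hxT : x ∈ T := by rw [hTxyz]; simp
  have hyT : y ∈ T := by rw [hTxyz]; simp
  have hzT : z ∈ T := by rw [hTxyz]; simp
  by_cases hfx : {a : ℤ × ℤ | χ (2 • x - a) = χ a}.Finite
  · by_cases hfy : {a : ℤ × ℤ | χ (2 • y - a) = χ a}.Finite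
    · by_cases hfz : {a : ℤ × ℤ | χ (2 • z - a) = χ a}.Finite
      · exfalso
        -- derive linear independence data from affine independence
        have hvw : ∀ j i : ℤ, j • (2 • y - 2 • x) + i • (2 • z - 2 • x) = 0 →
            j = 0 ∧ i = 0 := by
          intro j i hji
          have c1 : j * (2 * y.1 - 2 * x.1) + i * (2 * z.1 - 2 * x.1) = 0 := by
            have hf := congrArg Prod.fst hji
            simp [Prod.ext_iff] at hf
            linarith [hf]
          have c2 : j * (2 * y.2 - 2 * x.2) + i * (2 * z.2 - 2 * x.2) = 0 := by
            have hf := congrArg Prod.snd hji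
            simp [Prod.ext_iff] at hf
            linarith [hf]
          have r1 : (j : ℝ) * (2 * (y.1 : ℝ) - 2 * (x.1 : ℝ))
              + (i : ℝ) * (2 * (z.1 : ℝ) - 2 * (x.1 : ℝ)) = 0 := by exact_mod_cast c1
          have r2 : (j : ℝ) * (2 * (y.2 : ℝ) - 2 * (x.2 : ℝ))
              + (i : ℝ) * (2 * (z.2 : ℝ) - 2 * (x.2 : ℝ)) = 0 := by exact_mod_cast c2
          have ginj : Function.Injective (![⟨x, hxT⟩, ⟨y, hyT⟩, ⟨z, hzT⟩] : Fin 3 → T) := by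
            intro a b hab
            fin_cases a <;> fin_cases b <;> simp_all [Subtype.ext_iff]
          have h3 := hT.comp_embedding ⟨_, ginj⟩
          rw [affineIndependent_iff] at h3
          have hz0 := h3 Finset.univ ![-(j : ℝ) - (i : ℝ), (j : ℝ), (i : ℝ)] ?_ ?_
          · have e1 := hz0 1 (Finset.mem_univ _)
            have e2 := hz0 2 (Finset.mem_univ _)
            simp at e1 e2
            exact ⟨by exact_mod_cast e1, by exact_mod_cast e2⟩
          · simp [Fin.sum_univ_three]; ring
          · simp [Fin.sum_univ_three, Function.comp, Prod.ext_iff]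
            constructor
            · linear_combination r1 / 2
            · linear_combination r2 / 2
        exact key χ x y z _ _ rfl rfl hvw hfx hfy hfz
      · exact ⟨z, hzT, build χ z hfz⟩
    · exact ⟨y, hyT, build χ y hfy⟩
  · exact ⟨x, hxT, build χ x hfx⟩
end

section
/- For the cyclic group ℤ_n of order n and every r ∈ ℕ, the limit as n → ∞ of ms(ℤ_n, r) exists and equals 1/r², where ms(G, r)·|G| is the largest k such that every r-coloring of G contains a monochromatic symmetric subset of size ≥ k. -/
/-!
A monochromatic set symmetric about `x` in colour `c` lies inside
`{a | χ a = c ∧ χ (2x - a) = c}`, which is itself symmetric; so `MS(ℤ_n, r)` is the minimum over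
colourings of the largest of these sets.

Lower bound: summed over all centres `x`, their sizes count the pairs `(a, b)` of equal colour,
each weighted by the number of solutions of `2x = a + b`. That number is `|ker 2|` when `a` and `b`
lie in the same coset of `2G` and `0` otherwise, and `|ker 2| = [G : 2G]`; Cauchy–Schwarz over
(colour, coset) classes gives a total of at least `n² / r` over the `n r` pairs (centre, colour).

Upper bound: for a random colouring, the set for `(t, c)` has at most `2W + 2` elements, where `W`
counts the disjoint pairs `{a, t - a}` coloured `c` on both sides (a cyclic group has at most two
solutions of `2a = t`). Hence `E[y^(2W)] ≤ ((r² - 1 + y²)/r²)^(n/2)`, and this exponential moment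
bound with `y` close to `1`, plus a union bound over `(t, c)`, yields a colouring all of whose sets
have at most `(1/r² + ε) n` elements.
-/
open Filter

/-- MS(ℤ_n, r): the largest k such that every r-coloring of ℤ_n contains a
monochromatic symmetric subset of size ≥ k. -/
noncomputable def MScyc (n r : ℕ) : ℕ :=
  sSup {k : ℕ | ∀ χ : ZMod n → Fin r, ∃ A : Set (ZMod n),
    (∃ c, ∀ a ∈ A, χ a = c) ∧ (∃ x : ZMod n, A = (fun a => 2 • x - a) '' A) ∧ k ≤ A.ncard}

open Finset Function

theorem sum_prod_comp_of_injective {ι κ β R : Type*} [Fintype ι] [Fintype κ] [DecidableEq κ]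
    [Fintype β] [CommSemiring R] {σ : ι → κ} (hσ : Injective σ) (H : β → R) :
    ∑ g : κ → β, ∏ i, H (g (σ i)) =
      (∑ v, H v) ^ Fintype.card ι * Fintype.card β ^ (Fintype.card κ - Fintype.card ι) := by
  set S := univ.map ⟨σ, hσ⟩
  have hS : #S = Fintype.card ι := by simp [S]
  calc ∑ g : κ → β, ∏ i, H (g (σ i))
      = ∑ g : κ → β, ∏ k, if k ∈ S then H (g k) else 1 := by
        simp only [Fintype.prod_ite_mem, S, prod_map]; rfl
    _ = ∏ k, ∑ v, if k ∈ S then H v else 1 :=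
        (Fintype.prod_sum fun k v => if k ∈ S then H v else (1 : R)).symm
    _ = ∏ k, if k ∈ S then ∑ v, H v else (Fintype.card β : R) := by
        congr! 1 with k
        split_ifs <;> simp
    _ = _ := by
        rw [prod_ite, prod_const, prod_const, filter_not, card_sdiff, filter_univ_mem]
        simp [hS]

theorem sum_prod_apply_apply_of_injective {α β R : Type*} [Fintype α] [DecidableEq α] [Fintype β]
    [CommSemiring R] {p : α → Prop} [DecidablePred p] {τ : {a // p a} → {a // ¬ p a}}
    (hτ : Injective τ) (F : β → β → R) :
    ∑ χ : α → β, ∏ a : {a // p a}, F (χ a) (χ (τ a)) =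
      (∑ u, ∑ v, F u v) ^ Fintype.card {a // p a} *
        Fintype.card β ^ (Fintype.card {a // ¬ p a} - Fintype.card {a // p a}) := by
  rw [← (Equiv.piEquivPiSubtypeProd p fun _ => β).symm.sum_comp, Fintype.sum_prod_type,
    Finset.sum_comm]
  simp only [Equiv.piEquivPiSubtypeProd_symm_apply, Subtype.prop, (τ _).2, dite_true,
    dite_false, Subtype.coe_eta]
  calc _ = ∑ g : {a // ¬ p a} → β, ∏ a, ∑ u, F u (g (τ a)) := by
        congr! 1 with g
        exact (Fintype.prod_sum fun a u => F u (g (τ a))).symm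
    _ = _ := by rw [sum_prod_comp_of_injective hτ fun v => ∑ u, F u v, sum_comm]

theorem sq_card_le_card_mul_sum_card_fiber {α κ : Type*} [Fintype α] [Fintype κ] [DecidableEq κ]
    (f : α → κ) : Fintype.card α ^ 2 ≤ Fintype.card κ * ∑ a, #{b | f b = f a} := by
  have hfib : ∑ a, #{b | f b = f a} = ∑ k, #{a | f a = k} ^ 2 := by
    rw [← sum_fiberwise univ f]
    refine sum_congr rfl fun k _ => ?_
    rw [sum_congr rfl fun a ha => by rw [(mem_filter.1 ha).2], sum_const, smul_eq_mul, sq]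
  have hcard : Fintype.card α = ∑ k, #{a | f a = k} := card_eq_sum_card_fiberwise (by simp)
  rw [hfib, hcard]
  exact sq_sum_le_card_mul_sum_sq

theorem sum_sum_ite_and_eq {ι R : Type*} [Fintype ι] [DecidableEq ι] [CommRing R] (c : ι)
    (x : R) : ∑ u : ι, ∑ v : ι, (if u = c ∧ v = c then x else 1) = Fintype.card ι ^ 2 - 1 + x := by
  simp only [ite_and, sum_ite_irrel, sum_ite, filter_eq', filter_ne', mem_univ, if_true,
    sum_const, card_singleton, card_erase_of_mem, card_univ, one_smul, nsmul_eq_mul, mul_one,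
    smul_add]
  rw [Nat.cast_sub (Fintype.card_pos_iff.2 ⟨c⟩)]
  ring

section Doubling

variable {G : Type*} [AddCommGroup G] [Fintype G] [DecidableEq G]

theorem card_filter_two_nsmul_eq_two_nsmul (x₀ : G) :
    #{x | 2 • x = 2 • x₀} = #{x : G | 2 • x = 0} := by
  refine card_nbij' (· - x₀) (· + x₀) ?_ ?_ ?_ ?_ <;> intro x hx <;>
    simp_all [nsmul_sub]

theorem card_filter_two_nsmul_eq_le (s : G) : #{x | 2 • x = s} ≤ #{x : G | 2 • x = 0} := by
  by_cases hs : ∃ x₀, 2 • x₀ = s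
  · obtain ⟨x₀, rfl⟩ := hs
    exact (card_filter_two_nsmul_eq_two_nsmul x₀).le
  · push Not at hs
    simp [filter_false_of_mem fun x _ => hs x]

theorem index_range_two_nsmul :
    (nsmulAddMonoidHom 2 : G →+ G).range.index = #{x : G | 2 • x = 0} := by
  rw [AddSubgroup.index_range, ← Fintype.card_subtype, Nat.card_eq_fintype_card]
  exact Fintype.card_congr (Equiv.subtypeEquivRight fun _ => by simp)

theorem sq_card_le_card_mul_sum_card_reflect {ι : Type*} [Fintype ι] [DecidableEq ι] (χ : G → ι) :
    Fintype.card G ^ 2 ≤ Fintype.card ι * ∑ x, #{a | χ a = χ (2 • x - a)} := by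
  classical
  set H := (nsmulAddMonoidHom 2 : G →+ G).range
  have hfiber (a b : G) (h : (b : G ⧸ H) = a) : #{x | 2 • x = a + b} = #{x : G | 2 • x = 0} := by
    obtain ⟨y, hy⟩ := QuotientAddGroup.eq.1 h
    have hab : a + b = 2 • (b + y) := by
      rw [nsmulAddMonoidHom_apply] at hy
      rw [nsmul_add, hy]
      abel
    rw [hab, card_filter_two_nsmul_eq_two_nsmul]
  have hsplit (a : G) : #{x | χ a = χ (2 • x - a)} = ∑ b with χ b = χ a, #{x | 2 • x = a + b} := by
    rw [card_eq_sum_card_fiberwise (f := fun x => 2 • x - a) (t := {b | χ b = χ a})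
      (fun x hx => by simp_all)]
    refine sum_congr rfl fun b hb => ?_
    rw [filter_filter]
    refine congrArg card (filter_congr fun x _ => ?_)
    rw [sub_eq_iff_eq_add']
    exact ⟨And.right, fun h => ⟨by rw [h, add_sub_cancel_left, (mem_filter.1 hb).2], h⟩⟩
  calc Fintype.card G ^ 2
      ≤ Fintype.card (ι × G ⧸ H) * ∑ a, #{b | (χ b, (b : G ⧸ H)) = (χ a, (a : G ⧸ H))} :=
        sq_card_le_card_mul_sum_card_fiber _
    _ = Fintype.card ι * ∑ a, ∑ b with χ b = χ a ∧ (b : G ⧸ H) = a, #{x : G | 2 • x = 0} := by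
        rw [Fintype.card_prod, ← Nat.card_eq_fintype_card (α := G ⧸ H), ← AddSubgroup.index,
          index_range_two_nsmul]
        simp only [sum_const, smul_eq_mul, Prod.ext_iff, mul_sum]
        exact sum_congr rfl fun _ _ => by ring
    _ ≤ Fintype.card ι * ∑ a, ∑ b with χ b = χ a, #{x | 2 • x = a + b} := by
        gcongr with a
        rw [sum_congr rfl fun b hb => (hfiber a b (mem_filter.1 hb).2.2).symm]
        exact sum_le_sum_of_subset fun b => by simp +contextual
    _ = Fintype.card ι * ∑ x, #{a | χ a = χ (2 • x - a)} := by
        rw [sum_congr rfl fun a _ => (hsplit a).symm]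
        simp only [card_filter]
        rw [sum_comm]

end Doubling

section SymmMonoSet

variable {G ι : Type*} [AddCommGroup G] [Fintype G] [DecidableEq ι]

def symmMonoSet (χ : G → ι) (t : G) (c : ι) : Finset G := {a | χ a = c ∧ χ (t - a) = c}

theorem image_sub_symmMonoSet (χ : G → ι) (t : G) (c : ι) :
    (t - ·) '' (symmMonoSet χ t c : Set G) = symmMonoSet χ t c := by
  ext a
  simp only [Set.mem_image, Finset.mem_coe, symmMonoSet, mem_filter, mem_univ, true_and]
  constructor
  · rintro ⟨b, ⟨hb, hb'⟩, rfl⟩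
    exact ⟨hb', by rwa [sub_sub_cancel]⟩
  · rintro ⟨ha, ha'⟩
    exact ⟨t - a, ⟨ha', by rwa [sub_sub_cancel]⟩, sub_sub_cancel t a⟩

theorem subset_symmMonoSet (χ : G → ι) {A : Set G} {c : ι} (hA : ∀ a ∈ A, χ a = c) {x : G}
    (hsymm : A = (fun a => 2 • x - a) '' A) : A ⊆ symmMonoSet χ (2 • x) c := by
  intro a ha
  refine Finset.mem_coe.2 (mem_filter.2 ⟨mem_univ _, hA a ha, hA _ ?_⟩)
  rw [hsymm] at ha
  obtain ⟨b, hb, rfl⟩ := ha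
  rwa [sub_sub_cancel]

theorem sum_card_symmMonoSet [Fintype ι] (χ : G → ι) (t : G) :
    ∑ c, #(symmMonoSet χ t c) = #{a | χ a = χ (t - a)} := by
  rw [card_eq_sum_card_fiberwise (f := χ) (t := univ) (fun _ _ => mem_univ _)]
  refine sum_congr rfl fun c _ => congrArg card ?_
  ext a
  simp only [symmMonoSet, mem_filter, mem_univ, true_and]
  constructor
  · rintro ⟨rfl, h⟩; exact ⟨h.symm, rfl⟩
  · rintro ⟨h, rfl⟩; exact ⟨rfl, h.symm⟩

theorem exists_card_symmMonoSet_ge [DecidableEq G] [Fintype ι] (χ : G → ι) :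
    ∃ x c, (Fintype.card G : ℝ) / Fintype.card ι ^ 2 ≤ #(symmMonoSet χ (2 • x) c) := by
  have : Nonempty ι := ⟨χ 0⟩
  have hι : (0 : ℝ) < Fintype.card ι := Nat.cast_pos.2 Fintype.card_pos
  have hsum : ∑ _xc : G × ι, (Fintype.card G : ℝ) / Fintype.card ι ^ 2 ≤
      ∑ xc : G × ι, (#(symmMonoSet χ (2 • xc.1) xc.2) : ℝ) := by
    rw [sum_const, card_univ, Fintype.card_prod, Fintype.sum_prod_type]
    simp only [← Nat.cast_sum, sum_card_symmMonoSet]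
    have hsq : (Fintype.card G : ℝ) ^ 2 ≤ Fintype.card ι * ∑ x, #{a | χ a = χ (2 • x - a)} := by
      exact_mod_cast sq_card_le_card_mul_sum_card_reflect χ
    rw [nsmul_eq_mul, Nat.cast_mul]
    calc _ = (Fintype.card G : ℝ) ^ 2 / Fintype.card ι := by field_simp
      _ ≤ _ := by rw [div_le_iff₀ hι]; linarith
  obtain ⟨⟨x, c⟩, -, h⟩ := exists_le_of_sum_le univ_nonempty hsum
  exact ⟨x, c, h⟩

theorem card_symmMonoSet_le [LinearOrder G] [IsAddCyclic G] (χ : G → ι) (t : G) (c : ι) :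
    #(symmMonoSet χ t c) ≤ 2 * #{a ∈ symmMonoSet χ t c | a < t - a} + 2 := by
  set M := symmMonoSet χ t c
  have hcover : M ⊆ {a ∈ M | a < t - a} ∪ {a ∈ M | t - a < a} ∪ ({a | 2 • a = t} : Finset G) := by
    intro a ha
    rcases lt_trichotomy a (t - a) with h | h | h
    · simp [ha, h]
    · simp [two_nsmul, eq_sub_iff_add_eq.1 h]
    · simp [ha, h]
  have hmirror : #{a ∈ M | t - a < a} = #{a ∈ M | a < t - a} := by
    refine card_nbij' (t - ·) (t - ·) ?_ ?_ ?_ ?_ <;> intro a ha <;> simp_all [M, symmMonoSet]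
  have hhalf : #{a : G | 2 • a = t} ≤ 2 :=
    (card_filter_two_nsmul_eq_le t).trans (IsAddCyclic.card_nsmul_eq_zero_le two_pos)
  calc #M ≤ #{a ∈ M | a < t - a} + #{a ∈ M | t - a < a} + #{a : G | 2 • a = t} :=
        (card_le_card hcover).trans <|
          (card_union_le _ _).trans (add_le_add_left (card_union_le _ _) _)
    _ ≤ _ := by omega

theorem pow_card_symmMonoSet_le_prod [LinearOrder G] [IsAddCyclic G] (χ : G → ι) (t : G) (c : ι)
    {y : ℝ} (hy : 1 ≤ y) :
    y ^ #(symmMonoSet χ t c) ≤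
      y ^ 2 * ∏ a : {a : G // a < t - a}, if χ a = c ∧ χ (t - a) = c then y ^ 2 else 1 := by
  have hprod : ∏ a : {a : G // a < t - a}, (if χ a = c ∧ χ (t - a) = c then y ^ 2 else 1) =
      (y ^ 2) ^ #{a ∈ symmMonoSet χ t c | a < t - a} := by
    refine (prod_subtype {a | a < t - a} (p := fun a => a < t - a) (fun _ => by simp)
      fun a => if χ a = c ∧ χ (t - a) = c then y ^ 2 else 1).symm.trans ?_
    simp [prod_ite, filter_filter, symmMonoSet, and_comm]
  rw [hprod, ← pow_mul, ← pow_add]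
  exact pow_le_pow_right₀ hy (by linarith [card_symmMonoSet_le χ t c])

theorem sum_pow_card_symmMonoSet_le [DecidableEq G] [IsAddCyclic G] [Fintype ι] (t : G) (c : ι)
    {y : ℝ} (hy : 1 ≤ y) :
    ∑ χ : G → ι, y ^ #(symmMonoSet χ t c) ≤
      y ^ 2 * (Fintype.card ι + (y ^ 2 - 1) / (2 * Fintype.card ι)) ^ Fintype.card G := by
  -- any linear order picks one point `a < t - a` out of each pair `{a, t - a}`
  let _ : LinearOrder G := LinearOrder.lift' _ (Fintype.equivFin G).injective
  set r : ℝ := (Fintype.card ι : ℝ)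
  set δ := (y ^ 2 - 1) / (2 * r)
  have hr : 0 < r := Nat.cast_pos.2 (Fintype.card_pos_iff.2 ⟨c⟩)
  have hδ : 0 ≤ δ := div_nonneg (by nlinarith) (by positivity)
  let τ : {a : G // a < t - a} → {a : G // ¬ a < t - a} :=
    fun a => ⟨t - a, by rw [sub_sub_cancel]; exact not_lt.2 a.2.le⟩
  have hτ : Injective τ := fun a b h => Subtype.ext (sub_right_injective (congrArg Subtype.val h))
  let F : ι → ι → ℝ := fun u v => if u = c ∧ v = c then y ^ 2 else 1
  have hF : ∑ u, ∑ v, F u v = r ^ 2 - 1 + y ^ 2 := sum_sum_ite_and_eq c (y ^ 2)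
  -- bounding `r² - 1 + y²` by a square removes the dependence on the number of pairs
  have hsq : r ^ 2 - 1 + y ^ 2 ≤ (r + δ) ^ 2 := by
    have : (r + δ) ^ 2 = r ^ 2 - 1 + y ^ 2 + δ ^ 2 := by simp only [δ]; field_simp; ring
    nlinarith
  set m := Fintype.card {a : G // a < t - a}
  have hm : m ≤ Fintype.card {a : G // ¬ a < t - a} := Fintype.card_le_of_injective τ hτ
  have hm' : Fintype.card {a : G // ¬ a < t - a} = Fintype.card G - m :=
    Fintype.card_subtype_compl _
  calc ∑ χ : G → ι, y ^ #(symmMonoSet χ t c)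
      ≤ ∑ χ : G → ι, y ^ 2 * ∏ a : {a // a < t - a}, F (χ a) (χ (τ a)) :=
        sum_le_sum fun χ _ => pow_card_symmMonoSet_le_prod χ t c hy
    _ = y ^ 2 * ((r ^ 2 - 1 + y ^ 2) ^ m * r ^ (Fintype.card G - m - m)) := by
        rw [← mul_sum, sum_prod_apply_apply_of_injective hτ F, hF, hm']
    _ ≤ y ^ 2 * (((r + δ) ^ 2) ^ m * (r + δ) ^ (Fintype.card G - m - m)) := by
        gcongr <;> nlinarith
    _ = y ^ 2 * (r + δ) ^ Fintype.card G := by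
        rw [← pow_mul, ← pow_add]
        congr 2
        omega

theorem exists_coloring_card_symmMonoSet_lt [DecidableEq G] [IsAddCyclic G] [Fintype ι] {y : ℝ}
    (hy : 1 < y) {K : ℕ}
    (hK : Fintype.card G * Fintype.card ι * y ^ 2 *
        (Fintype.card ι + (y ^ 2 - 1) / (2 * Fintype.card ι)) ^ Fintype.card G <
      Fintype.card ι ^ Fintype.card G * y ^ K) :
    ∃ χ : G → ι, ∀ t c, #(symmMonoSet χ t c) < K := by
  have hsum : ∑ χ : G → ι, ∑ tc : G × ι, y ^ #(symmMonoSet χ tc.1 tc.2) < ∑ _χ : G → ι, y ^ K := by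
    rw [sum_comm, sum_const, card_univ, Fintype.card_fun, nsmul_eq_mul, Nat.cast_pow]
    refine lt_of_le_of_lt ?_ hK
    calc ∑ tc : G × ι, ∑ χ : G → ι, y ^ #(symmMonoSet χ tc.1 tc.2)
        ≤ ∑ _tc : G × ι, y ^ 2 * (Fintype.card ι + (y ^ 2 - 1) / (2 * Fintype.card ι)) ^
            Fintype.card G :=
          sum_le_sum fun tc _ => sum_pow_card_symmMonoSet_le tc.1 tc.2 hy.le
      _ = _ := by
          simp only [sum_const, card_univ, Fintype.card_prod, nsmul_eq_mul, Nat.cast_mul]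
          ring
  obtain ⟨χ, -, hχ⟩ := exists_lt_of_sum_lt hsum
  refine ⟨χ, fun t c => (pow_lt_pow_iff_right₀ hy).1 ?_⟩
  exact (single_le_sum (fun _ _ => by positivity) (mem_univ (t, c))).trans_lt hχ

end SymmMonoSet

theorem exists_one_add_lt_rpow {r ε : ℝ} (hr : 0 < r) (hε : 0 < ε) :
    ∃ y : ℝ, 1 < y ∧ 1 + (y ^ 2 - 1) / (2 * r ^ 2) < y ^ (1 / r ^ 2 + ε) := by
  set η := min 1 (ε * r ^ 2 / 4)
  have hη : 0 < η := lt_min one_pos (by positivity)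
  have hη₁ : η ≤ 1 := min_le_left _ _
  have hη₂ : η ≤ ε * r ^ 2 / 4 := min_le_right _ _
  refine ⟨1 + η, by linarith, ?_⟩
  set y := 1 + η
  have hy : 0 < y := by positivity
  have hlin : (y ^ 2 - 1) / (2 * r ^ 2) < (1 / r ^ 2 + ε) * (1 - y⁻¹) := by
    have h1 : 1 - y⁻¹ = η / y := by field_simp; ring
    have h2 : (1 + η) * (2 + η) < 2 * (1 + ε * r ^ 2) := by nlinarith
    calc (y ^ 2 - 1) / (2 * r ^ 2) = η * ((1 + η) * (2 + η)) / (2 * r ^ 2 * y) := by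
          field_simp; ring
      _ < η * (2 * (1 + ε * r ^ 2)) / (2 * r ^ 2 * y) := by gcongr
      _ = (1 / r ^ 2 + ε) * (1 - y⁻¹) := by rw [h1]; field_simp
  calc 1 + (y ^ 2 - 1) / (2 * r ^ 2) ≤ Real.exp ((y ^ 2 - 1) / (2 * r ^ 2)) := by
        linarith [Real.add_one_le_exp ((y ^ 2 - 1) / (2 * r ^ 2))]
    _ < Real.exp ((1 / r ^ 2 + ε) * Real.log y) :=
        Real.exp_lt_exp.2 <| hlin.trans_le <|
          mul_le_mul_of_nonneg_left (Real.one_sub_inv_le_log_of_pos hy) (by positivity)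
    _ = y ^ (1 / r ^ 2 + ε) := by rw [Real.rpow_def_of_pos hy, mul_comm]

theorem eventually_mul_pow_lt_pow {a b : ℝ} (C : ℝ) (ha : 0 ≤ a) (hab : a < b) :
    ∀ᶠ n : ℕ in atTop, C * n * a ^ n < b ^ n := by
  have hb : 0 < b := ha.trans_lt hab
  have h := (tendsto_self_mul_const_pow_of_lt_one (div_nonneg ha hb.le)
    ((div_lt_one hb).2 hab)).const_mul C
  rw [mul_zero] at h
  filter_upwards [h.eventually (gt_mem_nhds one_pos)] with n hn
  calc C * n * a ^ n = C * (n * (a / b) ^ n) * b ^ n := by rw [div_pow]; field_simp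
    _ < b ^ n := mul_lt_of_lt_one_left (pow_pos hb n) hn

section Cyclic

variable {n r : ℕ}

theorem MScyc_le [NeZero n] (hr : 0 < r) (χ : ZMod n → Fin r) {B : ℕ}
    (hB : ∀ x c, #(symmMonoSet χ (2 • x) c) ≤ B) : MScyc n r ≤ B := by
  refine csSup_le ⟨0, fun _ => ⟨∅, ⟨⟨0, hr⟩, by simp⟩, ⟨0, by simp⟩, by simp⟩⟩ ?_
  rintro k hk
  obtain ⟨A, ⟨c, hA⟩, ⟨x, hsymm⟩, hkA⟩ := hk χ
  calc k ≤ A.ncard := hkA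
    _ ≤ (symmMonoSet χ (2 • x) c : Set (ZMod n)).ncard :=
        Set.ncard_le_ncard (subset_symmMonoSet χ hA hsymm) (Finset.finite_toSet _)
    _ ≤ B := by rw [Set.ncard_coe_finset]; exact hB x c

theorem le_MScyc [NeZero n] (hr : 0 < r) {k : ℕ}
    (hk : ∀ χ : ZMod n → Fin r, ∃ x c, k ≤ #(symmMonoSet χ (2 • x) c)) : k ≤ MScyc n r := by
  refine le_csSup ⟨n, fun j hj => ?_⟩ fun χ => ?_
  · obtain ⟨A, -, -, hjA⟩ := hj fun _ => ⟨0, hr⟩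
    calc j ≤ A.ncard := hjA
      _ ≤ n := (Set.ncard_le_card A).trans_eq (Nat.card_zmod n)
  · obtain ⟨x, c, hxc⟩ := hk χ
    exact ⟨_, ⟨c, fun a ha => (mem_filter.1 ha).2.1⟩, ⟨x, (image_sub_symmMonoSet χ _ c).symm⟩,
      (Set.ncard_coe_finset _).symm ▸ hxc⟩

theorem div_sq_le_MScyc [NeZero n] (hr : 0 < r) : (n : ℝ) / r ^ 2 ≤ MScyc n r := by
  refine (Nat.le_ceil _).trans (Nat.cast_le.2 (le_MScyc hr fun χ => ?_))
  obtain ⟨x, c, h⟩ := exists_card_symmMonoSet_ge χ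
  exact ⟨x, c, Nat.ceil_le.2 (by simpa using h)⟩

end Cyclic

theorem eventually_MScyc_le {r : ℕ} (hr : 0 < r) {ε : ℝ} (hε : 0 < ε) :
    ∀ᶠ n : ℕ in atTop, (MScyc n r : ℝ) ≤ (1 / r ^ 2 + ε) * n := by
  have hr' : (0 : ℝ) < r := Nat.cast_pos.2 hr
  obtain ⟨y, hy, hab⟩ := exists_one_add_lt_rpow hr' hε
  have hy₀ : 0 < y := one_pos.trans hy
  set a := 1 + (y ^ 2 - 1) / (2 * (r : ℝ) ^ 2)
  have ha : 0 ≤ a := by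
    have : 0 ≤ y ^ 2 - 1 := by nlinarith
    positivity
  filter_upwards [eventually_mul_pow_lt_pow (r * y ^ 2) ha hab, eventually_gt_atTop 0]
    with n hn hn₀
  have : NeZero n := ⟨hn₀.ne'⟩
  set K := ⌈(1 / (r : ℝ) ^ 2 + ε) * n⌉₊
  have hyK : (y ^ (1 / (r : ℝ) ^ 2 + ε)) ^ n ≤ y ^ K := by
    rw [← Real.rpow_natCast, ← Real.rpow_mul hy₀.le, ← Real.rpow_natCast y K]
    exact Real.rpow_le_rpow_of_exponent_le hy.le (Nat.le_ceil _)
  obtain ⟨χ, hχ⟩ := exists_coloring_card_symmMonoSet_lt (G := ZMod n) (ι := Fin r) hy (K := K) <| by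
    simp only [ZMod.card, Fintype.card_fin]
    calc (n : ℝ) * r * y ^ 2 * (r + (y ^ 2 - 1) / (2 * r)) ^ n
        = r ^ n * (r * y ^ 2 * n * a ^ n) := by
          rw [show (r : ℝ) + (y ^ 2 - 1) / (2 * r) = r * a by simp only [a]; field_simp, mul_pow]
          ring
      _ < r ^ n * (y ^ (1 / (r : ℝ) ^ 2 + ε)) ^ n := by gcongr
      _ ≤ r ^ n * y ^ K := by gcongr
  have hle : MScyc n r + 1 ≤ K := by
    have := MScyc_le hr χ (B := K - 1) fun x c => Nat.le_sub_one_of_lt (hχ _ _)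
    have := hχ 0 ⟨0, hr⟩
    omega
  have hK : (K : ℝ) < (1 / (r : ℝ) ^ 2 + ε) * n + 1 := Nat.ceil_lt_add_one (by positivity)
  have : (MScyc n r : ℝ) + 1 ≤ K := by exact_mod_cast hle
  linarith

/-- lim_{n→∞} ms(ℤ_n, r) = 1/r². -/
theorem stmt_11 (r : ℕ) (hr : 0 < r) :
    Tendsto (fun n : ℕ => (MScyc n r : ℝ) / n) atTop (nhds (1 / (r : ℝ) ^ 2)) := by
  refine tendsto_order.2 ⟨fun a ha => ?_, fun b hb => ?_⟩
  · filter_upwards [eventually_gt_atTop 0] with n hn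
    have : NeZero n := ⟨hn.ne'⟩
    refine ha.trans_le ?_
    rw [le_div_iff₀ (Nat.cast_pos.2 hn), one_div_mul_eq_div]
    exact div_sq_le_MScyc hr
  · have hε : 0 < (b - 1 / (r : ℝ) ^ 2) / 2 := by linarith
    filter_upwards [eventually_MScyc_le hr hε, eventually_gt_atTop 0] with n hle hn
    rw [div_lt_iff₀ (Nat.cast_pos.2 hn)]
    calc (MScyc n r : ℝ) ≤ (1 / r ^ 2 + (b - 1 / r ^ 2) / 2) * n := hle
      _ < b * n := by gcongr; linarith
end

section
/- For every finite abelian group G of odd order and every r > 1, ms(G, r) > 1/r²: for every r-coloring of G there exists a monochromatic symmetric subset of size strictly greater than |G|/r². -/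
/-!
Let `P(x, c)` be the set of points `a` of colour `c` whose reflection `2x - a` also has colour `c`;
it is monochromatic and symmetric about `x`. As doubling is a bijection, summing `|P(x, c)|` over
all centres `x` gives `|χ⁻¹(c)|²`, so by Cauchy–Schwarz the `|G| r` pieces have total size at
least `|G|² / r`, i.e. average size at least `|G| / r²`. Not all pieces have the same size: the
points of `P(x, c)` other than `x` pair off under the reflection, and `x ∈ P(x, c)` iff `χ x = c`,
so the parity of `|P(x, c)|` depends on `c`. Hence some piece is strictly larger than the average.
-/

open Finset

theorem Finset.even_card_of_involution {α : Type*} {s : Finset α} (g : α → α)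
    (hg_mem : ∀ a ∈ s, g a ∈ s) (hg_invol : ∀ a ∈ s, g (g a) = a) (hg_ne : ∀ a ∈ s, g a ≠ a) :
    Even #s := by
  rw [← ZMod.natCast_eq_zero_iff_even, card_eq_sum_ones, Nat.cast_sum, Nat.cast_one]
  exact sum_involution (fun a _ => g a) (fun _ _ => by decide) (fun a ha _ => hg_ne a ha)
    hg_mem hg_invol

theorem Fintype.exists_sum_lt_card_nsmul {ι M : Type*} [Fintype ι] [AddCommMonoid M] [LinearOrder M]
    [IsOrderedCancelAddMonoid M] {f : ι → M} (hf : ∃ i j, f i ≠ f j) :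
    ∃ i, ∑ j, f j < Fintype.card ι • f i := by
  obtain ⟨i₁, i₂, hne⟩ := hf
  have : Nonempty ι := ⟨i₁⟩
  obtain ⟨i, hi⟩ := Finite.exists_max f
  have hlt : ∃ j ∈ univ, f j < f i := by
    by_contra! h
    exact hne <| ((hi i₁).antisymm (h i₁ (mem_univ _))).trans
      ((hi i₂).antisymm (h i₂ (mem_univ _))).symm
  refine ⟨i, ?_⟩
  calc ∑ j, f j < ∑ _j : ι, f i := sum_lt_sum (fun j _ => hi j) hlt
    _ = Fintype.card ι • f i := by rw [sum_const, card_univ]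

section SymmPiece

variable {G ι : Type*} [AddCommGroup G] [Fintype G] [DecidableEq ι]

def symmPiece (χ : G → ι) (x : G) (c : ι) : Finset G :=
  {a | χ a = c ∧ χ (2 • x - a) = c}

variable {χ : G → ι} {x a : G} {c : ι}

@[simp]
theorem mem_symmPiece : a ∈ symmPiece χ x c ↔ χ a = c ∧ χ (2 • x - a) = c := by
  simp [symmPiece]

theorem image_reflect_symmPiece :
    (fun a => 2 • x - a) '' (symmPiece χ x c : Set G) = symmPiece χ x c := by
  have hinv : Function.Involutive (fun a : G => 2 • x - a) := sub_sub_cancel _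
  rw [Set.image_eq_preimage_of_inverse hinv.leftInverse hinv.rightInverse]
  ext a
  simp [sub_sub_cancel, and_comm]

theorem odd_card_symmPiece_iff (h2 : Function.Injective (fun a : G => 2 • a)) :
    Odd #(symmPiece χ x c) ↔ χ x = c := by
  classical
  have hx : x ∈ symmPiece χ x c ↔ χ x = c := by simp [two_nsmul]
  have heven : Even #((symmPiece χ x c).erase x) := by
    refine even_card_of_involution (fun a => 2 • x - a) ?_ (fun a _ => sub_sub_cancel _ _) ?_
    · intro a ha
      obtain ⟨hax, ha⟩ := mem_erase.mp ha
      refine mem_erase.mpr ⟨fun h => hax ?_, ?_⟩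
      · rw [← sub_sub_cancel (2 • x) a, h, two_nsmul, add_sub_cancel_right]
      · simpa [sub_sub_cancel, and_comm] using ha
    · intro a ha h
      refine (mem_erase.mp ha).1 (h2 ?_).symm
      change 2 • x = 2 • a
      rw [two_nsmul a]
      exact sub_eq_iff_eq_add.mp h
  by_cases hxc : χ x = c
  · rw [← card_erase_add_one (hx.mpr hxc)]
    simpa [hxc] using heven.add_one
  · rw [← erase_eq_of_notMem (mt hx.mp hxc)]
    simpa [hxc] using heven

theorem sum_card_symmPiece (h2 : Function.Bijective (fun a : G => 2 • a)) (c : ι) :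
    ∑ x, #(symmPiece χ x c) = #{a | χ a = c} ^ 2 := by
  have hfiber : ∀ a : G, #{x | χ (2 • x - a) = c} = #{b | χ b = c} := fun a =>
    card_equiv ((Equiv.ofBijective _ h2).trans (Equiv.subRight a)) (by simp)
  calc ∑ x, #(symmPiece χ x c)
      = ∑ x, ∑ a, if χ a = c ∧ χ (2 • x - a) = c then 1 else 0 := by
        simp only [symmPiece, card_filter]
    _ = ∑ a, if χ a = c then #{b | χ b = c} else 0 := by
        rw [sum_comm]
        refine sum_congr rfl fun a _ => ?_
        split_ifs with ha
        · simp only [ha, true_and, ← hfiber a, card_filter]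
        · simp [ha]
    _ = #{a | χ a = c} ^ 2 := by rw [sum_ite, sum_const_zero, sum_const, smul_eq_mul, add_zero, sq]

theorem exists_card_lt_card_sq_mul_card_symmPiece [Fintype ι] [Nontrivial ι]
    (h2 : Function.Bijective (fun a : G => 2 • a)) (χ : G → ι) :
    ∃ x c, Fintype.card G < Fintype.card ι ^ 2 * #(symmPiece χ x c) := by
  set n := Fintype.card G
  set r := Fintype.card ι
  have hsum : ∑ p : G × ι, #(symmPiece χ p.1 p.2) = ∑ c, #{a | χ a = c} ^ 2 := by
    rw [Fintype.sum_prod_type, sum_comm]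
    exact sum_congr rfl fun c _ => sum_card_symmPiece h2 c
  have hcs : n ^ 2 ≤ r * ∑ c, #{a | χ a = c} ^ 2 := by
    have hclasses : ∑ c, #{a | χ a = c} = n := (card_eq_sum_card_fiberwise (by simp)).symm
    simpa [hclasses] using sq_sum_le_card_mul_sum_sq (s := univ) (f := fun c => #{a | χ a = c})
  have hnonconst : ∃ p q : G × ι, #(symmPiece χ p.1 p.2) ≠ #(symmPiece χ q.1 q.2) := by
    obtain ⟨c, hc⟩ := exists_ne (χ 0)
    refine ⟨(0, χ 0), (0, c), fun h => ?_⟩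
    have hodd : Odd #(symmPiece χ 0 (χ 0)) := (odd_card_symmPiece_iff h2.1).mpr rfl
    rw [h, odd_card_symmPiece_iff h2.1] at hodd
    exact hc hodd.symm
  obtain ⟨⟨x, c⟩, hlt⟩ := Fintype.exists_sum_lt_card_nsmul hnonconst
  refine ⟨x, c, Nat.lt_of_mul_lt_mul_left (a := n) ?_⟩
  calc n * n = n ^ 2 := (sq n).symm
    _ ≤ r * ∑ p : G × ι, #(symmPiece χ p.1 p.2) := hsum ▸ hcs
    _ < r * (n * r * #(symmPiece χ x c)) := by
        simpa [Fintype.card_prod, smul_eq_mul] using Nat.mul_lt_mul_of_pos_left hlt Fintype.card_pos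
    _ = n * (r ^ 2 * #(symmPiece χ x c)) := by ring

end SymmPiece

/-- For a finite abelian group of odd order and r > 1, every r-coloring has a
monochromatic symmetric subset of size strictly greater than |G|/r². -/
theorem stmt_12 (G : Type) [AddCommGroup G] [Fintype G] (hodd : Odd (Fintype.card G))
    (r : ℕ) (hr : 1 < r) (χ : G → Fin r) :
    ∃ A : Set G, (∃ c, ∀ a ∈ A, χ a = c) ∧
      (∃ x : G, A = (fun a => 2 • x - a) '' A) ∧
      (Fintype.card G : ℝ) / (r : ℝ) ^ 2 < (A.ncard : ℝ) := by
  have h2 : Function.Bijective (fun a : G => 2 • a) :=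
    Nat.Coprime.nsmul_right_bijective (by rwa [Nat.card_eq_fintype_card, Nat.coprime_two_right])
  have : Nontrivial (Fin r) := Fin.nontrivial_iff_two_le.mpr hr
  obtain ⟨x, c, hlt⟩ := exists_card_lt_card_sq_mul_card_symmPiece h2 χ
  refine ⟨symmPiece χ x c, ⟨c, fun a ha => (mem_symmPiece.mp ha).1⟩,
    ⟨x, image_reflect_symmPiece.symm⟩, ?_⟩
  rw [Fintype.card_fin] at hlt
  rw [Set.ncard_coe_finset, div_lt_iff₀ (by positivity)]
  exact_mod_cast hlt.trans_eq (mul_comm _ _)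
end

section
/- For the quaternion group Q₈ = {±1, ±i, ±j, ±k}, there exists a 2-coloring such that every monochromatic symmetric subset has size at most 1; hence ms(Q₈, 2) = 1/8 < 1/4. -/
private def chi8 : QuaternionGroup 2 → Fin 2
  | .a i => if i.val < 2 then 0 else 1
  | .xa i => if i.val < 2 then 0 else 1

private lemma chi8_key : ∀ g a b : QuaternionGroup 2, a ≠ b →
    ((g * a⁻¹ * g = b) ∨ (g * a⁻¹ * g = a ∧ g * b⁻¹ * g = b)) →
    chi8 a ≠ chi8 b := by decide

/-- ms(Q₈, 2) = 1/8: some 2-coloring of the quaternion group Q₈ admits no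
monochromatic symmetric subset of size > 1, while every 2-coloring admits one of
size ≥ 1. -/
theorem stmt_14 :
    (∃ χ : QuaternionGroup 2 → Fin 2, ∀ A : Set (QuaternionGroup 2),
        (∃ c, ∀ a ∈ A, χ a = c) →
        (∃ g, A = (fun a => g * a⁻¹ * g) '' A) → A.ncard ≤ 1) ∧
    (∀ χ : QuaternionGroup 2 → Fin 2, ∃ A : Set (QuaternionGroup 2),
        (∃ c, ∀ a ∈ A, χ a = c) ∧
        (∃ g, A = (fun a => g * a⁻¹ * g) '' A) ∧ 1 ≤ A.ncard) := by
  constructor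
  · refine ⟨chi8, ?_⟩
    rintro A ⟨c, hc⟩ ⟨g, hg⟩
    by_contra h
    push_neg at h
    have hfin : A.Finite := Set.toFinite A
    obtain ⟨a, b, ha, hb, hab⟩ := Set.one_lt_ncard_iff hfin |>.mp h
    -- σ_g maps A into A
    have hσ : ∀ x ∈ A, g * x⁻¹ * g ∈ A := by
      intro x hx
      rw [hg]; exact ⟨x, hx, rfl⟩
    have hinv : ∀ x : QuaternionGroup 2, g * (g * x⁻¹ * g)⁻¹ * g = x := by
      intro x; group
    by_cases h1 : g * a⁻¹ * g = a
    · by_cases h2 : g * b⁻¹ * g = b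
      · exact chi8_key g a b hab (Or.inr ⟨h1, h2⟩)
          (by rw [hc a ha, hc b hb])
      · have hb' := hσ b hb
        exact chi8_key g b (g * b⁻¹ * g) (Ne.symm h2) (Or.inl rfl)
          (by rw [hc b hb, hc _ hb'])
    · have ha' := hσ a ha
      exact chi8_key g a (g * a⁻¹ * g) (Ne.symm h1) (Or.inl rfl)
        (by rw [hc a ha, hc _ ha'])
  · intro χ
    refine ⟨{1}, ⟨χ 1, by rintro a rfl; rfl⟩, ⟨1, ?_⟩, by simp⟩
    simp
end

section
/- For every measurable 2-coloring of the unit interval [0,1] there exists a monochromatic symmetric subset of Lebesgue measure at least 1/(4 + √6). -/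
/-!
Let `b`, `c` be the indicators of the two colour classes `B`, `C`, so `b + c = 𝟙[0,1]`. The value
`(b ⋆ b) s` is the measure of `B ∩ (s - B)`, the largest subset of `B` symmetric about `s / 2`;
so if every monochromatic symmetric set has measure at most `T`, then `b ⋆ b ≤ T` and `c ⋆ c ≤ T`,
whence `‖b ⋆ b‖₂² ≤ T |B|²` and `‖c ⋆ c‖₂² ≤ T |C|²`. The identity
`∫ (b ⋆ c)² = ∫ (b̃ ⋆ b) (c̃ ⋆ c)` (with `b̃ x = b (-x)`; Parseval's `∫ |b̂|² |ĉ|²` without Fourier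
analysis) and Cauchy–Schwarz give `‖b ⋆ c‖₂² ≤ ‖b ⋆ b‖₂ ‖c ⋆ c‖₂`. Minkowski's inequality then
bounds `‖𝟙[0,1] ⋆ 𝟙[0,1]‖₂` by `2 √T (|B| + |C|) = 2 √T`, while `𝟙[0,1] ⋆ 𝟙[0,1]` is the tent
function on `[0, 2]`, whose squared `L²` norm is `2 / 3`. Hence `2 / 3 ≤ 4 T`, which fails for
`T = 1 / (4 + √6)`.
-/

open MeasureTheory Set
open scoped ENNReal

theorem eLpNorm_two_sq_eq_lintegral {α : Type*} [MeasurableSpace α] {μ : Measure α}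
    (u : α → ℝ≥0∞) : eLpNorm u 2 μ ^ 2 = ∫⁻ x, u x ^ 2 ∂μ := by
  have := eLpNorm_nnreal_pow_eq_lintegral (f := u) (μ := μ) (p := 2) two_ne_zero
  simp only [enorm_eq_self, NNReal.coe_ofNat, ENNReal.coe_ofNat] at this
  exact_mod_cast this

theorem lintegral_mul_le_eLpNorm_two_mul {α : Type*} [MeasurableSpace α] {μ : Measure α}
    {u v : α → ℝ≥0∞} (hu : AEMeasurable u μ) (hv : AEMeasurable v μ) :
    ∫⁻ x, u x * v x ∂μ ≤ eLpNorm u 2 μ * eLpNorm v 2 μ := by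
  simpa [eLpNorm_eq_lintegral_rpow_enorm_toReal] using
    ENNReal.lintegral_mul_le_Lp_mul_Lq μ Real.HolderConjugate.two_two hu hv

theorem ENNReal.four_mul_le_sq_add (a b : ℝ≥0∞) : 4 * a * b ≤ (a + b) ^ 2 := by
  rcases eq_or_ne a ⊤ with rfl | ha
  · simp
  rcases eq_or_ne b ⊤ with rfl | hb
  · simp
  lift a to NNReal using ha
  lift b to NNReal using hb
  exact_mod_cast _root_.four_mul_le_sq_add a b

section LConvolution

variable {G : Type*} [MeasurableSpace G] [AddCommGroup G] [MeasurableNeg G] {μ : Measure G}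
  {f g h k : G → ℝ≥0∞}

theorem lconvolution_comp_neg [μ.IsNegInvariant] :
    (fun x ↦ (f ⋆ₗ[μ] g) (-x)) = (fun x ↦ f (-x)) ⋆ₗ[μ] (fun x ↦ g (-x)) := by
  ext x
  simp only [lconvolution_def]
  rw [← lintegral_neg_eq_self]
  simp only [neg_neg, neg_add]

theorem lintegral_mul_eq_lconvolution_zero [μ.IsNegInvariant] :
    ∫⁻ x, f x * g x ∂μ = ((fun x ↦ f (-x)) ⋆ₗ[μ] g) 0 := by
  simp only [lconvolution_def, add_zero]
  exact (lintegral_neg_eq_self (fun x ↦ f x * g x)).symm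

variable [MeasurableAdd₂ G]

theorem add_lconvolution (hf : Measurable f) (hh : Measurable h) :
    (f + g) ⋆ₗ[μ] h = f ⋆ₗ[μ] h + g ⋆ₗ[μ] h := by
  ext x
  simp only [lconvolution_def, Pi.add_apply, add_mul]
  exact lintegral_add_left (by fun_prop) _

variable [SFinite μ] [μ.IsAddLeftInvariant]

theorem lintegral_lconvolution (hf : Measurable f) (hg : Measurable g) :
    ∫⁻ x, (f ⋆ₗ[μ] g) x ∂μ = (∫⁻ x, f x ∂μ) * ∫⁻ x, g x ∂μ := by
  simp only [lconvolution_def]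
  rw [lintegral_lintegral_swap (by fun_prop), ← lintegral_mul_const'' _ hf.aemeasurable]
  congr with y
  rw [lintegral_const_mul'' _ (by fun_prop), lintegral_add_left_eq_self g (-y)]

theorem eLpNorm_lconvolution_self_sq_le {T : ℝ≥0∞} (hf : Measurable f)
    (hT : ∀ x, (f ⋆ₗ[μ] f) x ≤ T) :
    eLpNorm (f ⋆ₗ[μ] f) 2 μ ^ 2 ≤ T * (∫⁻ x, f x ∂μ) ^ 2 := by
  calc eLpNorm (f ⋆ₗ[μ] f) 2 μ ^ 2 = ∫⁻ x, (f ⋆ₗ[μ] f) x * (f ⋆ₗ[μ] f) x ∂μ := by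
        simp only [eLpNorm_two_sq_eq_lintegral, ← sq]
    _ ≤ ∫⁻ x, T * (f ⋆ₗ[μ] f) x ∂μ := lintegral_mono fun x ↦ mul_le_mul_left (hT x) _
    _ = T * (∫⁻ x, f x ∂μ) ^ 2 := by
        rw [lintegral_const_mul _ (measurable_lconvolution μ hf hf), lintegral_lconvolution hf hf,
          sq]

variable [μ.IsNegInvariant]

theorem lconvolution_lconvolution_lconvolution_comm (hf : Measurable f) (hg : Measurable g)
    (hh : Measurable h) (hk : Measurable k) :
    (f ⋆ₗ[μ] g) ⋆ₗ[μ] (h ⋆ₗ[μ] k) = (f ⋆ₗ[μ] h) ⋆ₗ[μ] (g ⋆ₗ[μ] k) := by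
  rw [← lconvolution_assoc hf hg (measurable_lconvolution μ hh hk),
    lconvolution_assoc hg hh hk, lconvolution_comm (f := g), ← lconvolution_assoc hh hg hk,
    lconvolution_assoc hf hh (measurable_lconvolution μ hg hk)]

theorem lintegral_lconvolution_sq (hf : Measurable f) (hg : Measurable g) :
    ∫⁻ x, (f ⋆ₗ[μ] g) x ^ 2 ∂μ =
      ∫⁻ x, ((fun y ↦ f (-y)) ⋆ₗ[μ] f) x * ((fun y ↦ g (-y)) ⋆ₗ[μ] g) x ∂μ := by
  have hf' : Measurable fun y ↦ f (-y) := hf.comp measurable_neg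
  have hg' : Measurable fun y ↦ g (-y) := hg.comp measurable_neg
  have hsymm : (fun x ↦ ((fun y ↦ f (-y)) ⋆ₗ[μ] f) (-x)) = (fun y ↦ f (-y)) ⋆ₗ[μ] f := by
    rw [lconvolution_comp_neg, lconvolution_comm]
    simp only [neg_neg]
  simp only [sq]
  rw [lintegral_mul_eq_lconvolution_zero, lintegral_mul_eq_lconvolution_zero, hsymm,
    lconvolution_comp_neg, lconvolution_lconvolution_lconvolution_comm hf' hg' hf hg]

theorem eLpNorm_lconvolution_sq_le (hf : Measurable f) (hg : Measurable g) :
    eLpNorm (f ⋆ₗ[μ] g) 2 μ ^ 2 ≤ eLpNorm (f ⋆ₗ[μ] f) 2 μ * eLpNorm (g ⋆ₗ[μ] g) 2 μ := by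
  have hreflect : ∀ u : G → ℝ≥0∞, Measurable u →
      eLpNorm ((fun y ↦ u (-y)) ⋆ₗ[μ] u) 2 μ = eLpNorm (u ⋆ₗ[μ] u) 2 μ := by
    intro u hu
    apply (ENNReal.pow_right_strictMono two_ne_zero).injective
    simp only [eLpNorm_two_sq_eq_lintegral, lintegral_lconvolution_sq hu hu, ← sq]
  rw [eLpNorm_two_sq_eq_lintegral, lintegral_lconvolution_sq hf hg, ← hreflect f hf,
    ← hreflect g hg]
  exact lintegral_mul_le_eLpNorm_two_mul (by fun_prop) (by fun_prop)

theorem eLpNorm_add_lconvolution_add_le (hf : Measurable f) (hg : Measurable g) :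
    eLpNorm ((f + g) ⋆ₗ[μ] (f + g)) 2 μ ≤
      eLpNorm (f ⋆ₗ[μ] f) 2 μ + eLpNorm (g ⋆ₗ[μ] g) 2 μ + 2 * eLpNorm (f ⋆ₗ[μ] g) 2 μ := by
  have hexpand : (f + g) ⋆ₗ[μ] (f + g) = f ⋆ₗ[μ] f + g ⋆ₗ[μ] g + (f ⋆ₗ[μ] g + f ⋆ₗ[μ] g) := by
    rw [add_lconvolution hf (hf.add hg), lconvolution_comm (f := f), lconvolution_comm (f := g),
      add_lconvolution hf hf, add_lconvolution hf hg, lconvolution_comm (f := g) (g := f)]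
    abel
  have hmeas : ∀ u v : G → ℝ≥0∞, Measurable u → Measurable v →
      AEStronglyMeasurable (u ⋆ₗ[μ] v) μ :=
    fun u v hu hv ↦ (measurable_lconvolution μ hu hv).aestronglyMeasurable
  rw [hexpand, two_mul]
  refine (eLpNorm_add_le ((hmeas _ _ hf hf).add (hmeas _ _ hg hg))
    ((hmeas _ _ hf hg).add (hmeas _ _ hf hg)) one_le_two).trans (add_le_add ?_ ?_)
  · exact eLpNorm_add_le (hmeas _ _ hf hf) (hmeas _ _ hg hg) one_le_two
  · exact eLpNorm_add_le (hmeas _ _ hf hg) (hmeas _ _ hf hg) one_le_two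

theorem eLpNorm_add_lconvolution_add_sq_le {T : ℝ≥0∞} (hf : Measurable f) (hg : Measurable g)
    (hfT : ∀ x, (f ⋆ₗ[μ] f) x ≤ T) (hgT : ∀ x, (g ⋆ₗ[μ] g) x ≤ T) :
    eLpNorm ((f + g) ⋆ₗ[μ] (f + g)) 2 μ ^ 2 ≤ 4 * T * (∫⁻ x, f x ∂μ + ∫⁻ x, g x ∂μ) ^ 2 := by
  set nf := eLpNorm (f ⋆ₗ[μ] f) 2 μ
  set ng := eLpNorm (g ⋆ₗ[μ] g) 2 μ
  set nfg := eLpNorm (f ⋆ₗ[μ] g) 2 μ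
  have hnf := eLpNorm_lconvolution_self_sq_le hf hfT
  have hng := eLpNorm_lconvolution_self_sq_le hg hgT
  have hnfg : nfg ^ 2 ≤ nf * ng := eLpNorm_lconvolution_sq_le hf hg
  have hminkowski := eLpNorm_add_lconvolution_add_le (μ := μ) hf hg
  set a := ∫⁻ t, f t ∂μ
  set b := ∫⁻ t, g t ∂μ
  have hnfng : nf * ng ≤ T * (a * b) := by
    rw [← ENNReal.pow_le_pow_left_iff two_ne_zero]
    calc (nf * ng) ^ 2 = nf ^ 2 * ng ^ 2 := mul_pow nf ng 2
      _ ≤ (T * a ^ 2) * (T * b ^ 2) := mul_le_mul' hnf hng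
      _ = (T * (a * b)) ^ 2 := by ring
  have hamgm : 2 * nfg ≤ nf + ng := by
    rw [← ENNReal.pow_le_pow_left_iff two_ne_zero]
    calc (2 * nfg) ^ 2 = 4 * nfg ^ 2 := by ring
      _ ≤ 4 * (nf * ng) := by gcongr
      _ ≤ (nf + ng) ^ 2 := by rw [← mul_assoc]; exact ENNReal.four_mul_le_sq_add nf ng
  calc eLpNorm ((f + g) ⋆ₗ[μ] (f + g)) 2 μ ^ 2 ≤ (2 * (nf + ng)) ^ 2 := by
        gcongr
        exact hminkowski.trans (by rw [two_mul (nf + ng)]; gcongr)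
    _ = 4 * (nf ^ 2 + ng ^ 2 + 2 * (nf * ng)) := by ring
    _ ≤ 4 * (T * a ^ 2 + T * b ^ 2 + 2 * (T * (a * b))) := by gcongr
    _ = 4 * T * (a + b) ^ 2 := by ring

end LConvolution

theorem indicator_lconvolution_indicator {G : Type*} [MeasurableSpace G] [AddCommGroup G]
    [MeasurableNeg G] [MeasurableAdd G] {μ : Measure G} {s t : Set G} (hs : MeasurableSet s)
    (ht : MeasurableSet t) (x : G) :
    (s.indicator 1 ⋆ₗ[μ] t.indicator 1) x = μ (s ∩ (fun y ↦ -y + x) ⁻¹' t) := by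
  rw [lconvolution_def, ← lintegral_indicator_one (hs.inter (ht.preimage (by fun_prop))),
    inter_indicator_one]
  rfl

theorem Function.Involutive.image_inter_preimage {α : Type*} {φ : α → α} (hφ : φ.Involutive)
    (S : Set α) : φ '' (S ∩ φ ⁻¹' S) = S ∩ φ ⁻¹' S := by
  rw [hφ.image_eq_preimage_symm, preimage_inter, ← preimage_comp, hφ.comp_self, preimage_id,
    inter_comm]

theorem exists_symmetric_subset_volume_eq_lconvolution {S : Set ℝ} (hS : MeasurableSet S) (s : ℝ) :
    ∃ A ⊆ S, MeasurableSet A ∧ (∃ x : ℝ, A = (fun a => 2 * x - a) '' A) ∧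
      volume A = (S.indicator 1 ⋆ₗ S.indicator 1) s := by
  have hreflect : (fun a : ℝ ↦ 2 * (s / 2) - a) = fun a ↦ -a + s := by
    ext a; ring
  refine ⟨S ∩ (fun a ↦ 2 * (s / 2) - a) ⁻¹' S, inter_subset_left,
    hS.inter (hS.preimage (by fun_prop)), ⟨s / 2, ?_⟩, ?_⟩
  · refine (Function.Involutive.image_inter_preimage (fun a ↦ ?_) S).symm
    ring
  · rw [indicator_lconvolution_indicator hS hS, hreflect]

theorem indicator_Icc_lconvolution (s : ℝ) :
    ((Icc 0 1).indicator 1 ⋆ₗ (Icc 0 1).indicator 1) s =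
      ENNReal.ofReal (min 1 s - max 0 (s - 1)) := by
  have hpre : (fun y ↦ -y + s) ⁻¹' Icc (0 : ℝ) 1 = Icc (s - 1) s := by
    ext y
    simp only [mem_preimage, mem_Icc]
    constructor <;> rintro ⟨h₁, h₂⟩ <;> constructor <;> linarith
  rw [indicator_lconvolution_indicator measurableSet_Icc measurableSet_Icc, hpre, Icc_inter_Icc,
    Real.volume_Icc]

theorem integral_tent_sq : ∫ s in (0 : ℝ)..2, (min 1 s - max 0 (s - 1)) ^ 2 = 2 / 3 := by
  have hcont : Continuous fun s : ℝ ↦ (min 1 s - max 0 (s - 1)) ^ 2 := by fun_prop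
  rw [← intervalIntegral.integral_add_adjacent_intervals (b := 1) (hcont.intervalIntegrable _ _)
    (hcont.intervalIntegrable _ _)]
  have hleft : ∫ s in (0 : ℝ)..1, (min 1 s - max 0 (s - 1)) ^ 2 = ∫ s in (0 : ℝ)..1, s ^ 2 := by
    refine intervalIntegral.integral_congr fun s hs ↦ ?_
    rw [uIcc_of_le zero_le_one] at hs
    simp only [min_eq_right hs.2, max_eq_left (by linarith [hs.2] : s - 1 ≤ 0), sub_zero]
  have hright : ∫ s in (1 : ℝ)..2, (min 1 s - max 0 (s - 1)) ^ 2 =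
      ∫ s in (1 : ℝ)..2, (2 - s) ^ 2 := by
    refine intervalIntegral.integral_congr fun s hs ↦ ?_
    rw [uIcc_of_le one_le_two] at hs
    simp only [min_eq_left hs.1, max_eq_right (by linarith [hs.1] : 0 ≤ s - 1)]
    ring
  rw [hleft, hright, intervalIntegral.integral_comp_sub_left (fun s ↦ s ^ 2), integral_pow]
  norm_num

theorem ofReal_two_thirds_le_eLpNorm_indicator_Icc_lconvolution_sq :
    ENNReal.ofReal (2 / 3) ≤
      eLpNorm ((Icc (0 : ℝ) 1).indicator 1 ⋆ₗ (Icc (0 : ℝ) 1).indicator 1) 2 volume ^ 2 := by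
  set tent : ℝ → ℝ := fun s ↦ min 1 s - max 0 (s - 1)
  have htent : ∀ s ∈ Ioc (0 : ℝ) 2, 0 ≤ tent s := fun s hs ↦ by
    simp only [tent]
    rcases le_total s 1 with h | h
    · rw [min_eq_right h, max_eq_left (by linarith)]; linarith [hs.1]
    · rw [min_eq_left h, max_eq_right (by linarith)]; linarith [hs.2]
  have hcont : Continuous fun s ↦ tent s ^ 2 := by simp only [tent]; fun_prop
  rw [eLpNorm_two_sq_eq_lintegral]
  simp_rw [indicator_Icc_lconvolution]
  calc ENNReal.ofReal (2 / 3) = ENNReal.ofReal (∫ s in Ioc 0 2, tent s ^ 2) := by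
        rw [← intervalIntegral.integral_of_le zero_le_two, integral_tent_sq]
    _ = ∫⁻ s in Ioc 0 2, ENNReal.ofReal (tent s ^ 2) :=
        ofReal_integral_eq_lintegral_ofReal (hcont.integrableOn_Icc.mono_set Ioc_subset_Icc_self)
          (.of_forall fun s ↦ sq_nonneg _)
    _ = ∫⁻ s in Ioc 0 2, ENNReal.ofReal (tent s) ^ 2 :=
        setLIntegral_congr_fun measurableSet_Ioc fun s hs ↦ ENNReal.ofReal_pow (htent s hs) 2
    _ ≤ ∫⁻ s, ENNReal.ofReal (tent s) ^ 2 := setLIntegral_le_lintegral _ _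

theorem four_mul_one_div_four_add_sqrt_six_lt : 4 * (1 / (4 + √6)) < (2 / 3 : ℝ) := by
  have h6 : 2 < √6 := (Real.lt_sqrt zero_le_two).mpr (by norm_num)
  rw [mul_one_div, div_lt_div_iff₀ (by positivity) (by norm_num)]
  linarith

/-- Every measurable 2-coloring of [0,1] has a monochromatic measurable symmetric
subset of Lebesgue measure at least 1/(4 + √6). -/
theorem stmt_15 (B : Set ℝ) (hB : MeasurableSet B) (hBsub : B ⊆ Set.Icc 0 1) :
    ∃ A : Set ℝ, MeasurableSet A ∧ (A ⊆ B ∨ A ⊆ Set.Icc 0 1 \ B) ∧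
      (∃ x : ℝ, A = (fun a => 2 * x - a) '' A) ∧
      ENNReal.ofReal (1 / (4 + Real.sqrt 6)) ≤ volume A := by
  by_contra! hsmall
  set T := ENNReal.ofReal (1 / (4 + Real.sqrt 6))
  have hconv : ∀ S, MeasurableSet S → (S ⊆ B ∨ S ⊆ Icc 0 1 \ B) →
      ∀ s, (S.indicator 1 ⋆ₗ S.indicator 1) s ≤ T := by
    intro S hS hSc s
    obtain ⟨A, hAS, hA, hsymm, hvol⟩ := exists_symmetric_subset_volume_eq_lconvolution hS s
    exact hvol ▸ (hsmall A hA (hSc.imp hAS.trans hAS.trans) hsymm).le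
  have hC : MeasurableSet (Icc 0 1 \ B) := measurableSet_Icc.diff hB
  have hsplit : (Icc (0 : ℝ) 1).indicator 1 =
      B.indicator (1 : ℝ → ℝ≥0∞) + (Icc 0 1 \ B).indicator 1 := by
    rw [Pi.add_def, ← indicator_union_of_disjoint disjoint_sdiff_right, union_sdiff_cancel hBsub]
  have hmass : (∫⁻ x, B.indicator 1 x) + ∫⁻ x, (Icc 0 1 \ B).indicator 1 x = (1 : ℝ≥0∞) := by
    rw [lintegral_indicator_one hB, lintegral_indicator_one hC,
      ← measure_union disjoint_sdiff_right hC, union_sdiff_cancel hBsub, Real.volume_Icc]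
    simp
  have hupper := eLpNorm_add_lconvolution_add_sq_le (μ := volume) (measurable_one.indicator hB)
    (measurable_one.indicator hC) (hconv B hB (.inl subset_rfl)) (hconv _ hC (.inr subset_rfl))
  rw [← hsplit, hmass, one_pow, mul_one] at hupper
  have hlower := ofReal_two_thirds_le_eLpNorm_indicator_Icc_lconvolution_sq.trans hupper
  rw [show (4 : ℝ≥0∞) = ENNReal.ofReal 4 by simp, ← ENNReal.ofReal_mul (by norm_num),
    ENNReal.ofReal_le_ofReal_iff (by positivity)] at hlower
  exact four_mul_one_div_four_add_sqrt_six_lt.not_ge hlower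
end

section
/- For every r ∈ ℕ, the sequence ms([n], r) converges as n → ∞, and its limit equals its infimum over n ∈ ℕ, which equals ms([0,1], r). -/
open MeasureTheory Filter

/-- MS([n], r): the maximal k such that every r-coloring of {1,…,n} admits a
monochromatic symmetric subset of size ≥ k. -/
noncomputable def MSdisc (n r : ℕ) : ℕ :=
  sSup {k : ℕ | ∀ χ : ℤ → Fin r, ∃ A : Set ℤ, A ⊆ Set.Icc 1 (n : ℤ) ∧
    (∃ c, ∀ a ∈ A, χ a = c) ∧ (∃ s : ℤ, A = (fun a => s - a) '' A) ∧ k ≤ A.ncard}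

/-- ms([0,1], r): supremum of ε > 0 such that every measurable r-coloring of
[0,1] admits a monochromatic measurable symmetric subset of measure ≥ ε. -/
noncomputable def msUnit (r : ℕ) : ℝ :=
  sSup {ε : ℝ | 0 < ε ∧ ∀ χ : ℝ → Fin r, Measurable χ →
    ∃ A : Set ℝ, MeasurableSet A ∧ A ⊆ Set.Icc 0 1 ∧ (∃ c, ∀ a ∈ A, χ a = c) ∧
      (∃ x : ℝ, A = (fun a => 2 * x - a) '' A) ∧ ENNReal.ofReal ε ≤ volume A}

/-!
Compare a coloring `χ` of `{1, …, n}` with its step version `t ↦ χ ⌈n t⌉` on `[0, 1]`.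

If the step coloring has a symmetric monochromatic set `A` of measure `ε` with centre `σ`, cut
every cell `((i - 1) / n, i / n]` at relative position `θ = fract (σ n)`. The reflection about
`σ` then permutes the left pieces among themselves and the right pieces among themselves, so the
cells whose left (resp. right) piece meets `A` in positive measure form a symmetric
monochromatic set for `χ`, and one of the two has at least `n ε` elements. Hence
`ms([0,1], r) ≤ ms([n], r)` for every `n`.

Conversely, by inner and outer regularity a measurable coloring of `[0, 1]` agrees, outside a
set of small measure, with a step coloring at every fine enough scale. A symmetric
monochromatic set of the step coloring covers a union of cells `U`, symmetric up to finitely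
many points; if `S ⊆ U` is the part of the right color and `ρ` the reflection, then `S ∩ ρ S` is
symmetric, monochromatic and of measure at least `|U| - 2 |U \ S|`. Hence
`ms([n], r) ≤ ms([0,1], r) + o(1)`.
-/

open Set
open scoped ENNReal

section Extremal

variable {n r : ℕ}

theorem bddAbove_setOf_MSdisc (hr : 0 < r) :
    BddAbove {k : ℕ | ∀ χ : ℤ → Fin r, ∃ A : Set ℤ, A ⊆ Icc 1 (n : ℤ) ∧
      (∃ c, ∀ a ∈ A, χ a = c) ∧ (∃ s : ℤ, A = (fun a => s - a) '' A) ∧ k ≤ A.ncard} := by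
  refine ⟨n, fun k hk => ?_⟩
  obtain ⟨A, hA, -, -, hk⟩ := hk fun _ => ⟨0, hr⟩
  calc k ≤ A.ncard := hk
    _ ≤ (Icc (1 : ℤ) n).ncard := ncard_le_ncard hA (finite_Icc _ _)
    _ = n := by rw [← Finset.coe_Icc, ncard_coe_finset, Int.card_Icc]; simp

theorem le_MSdisc (hr : 0 < r) {k : ℕ}
    (h : ∀ χ : ℤ → Fin r, ∃ A : Set ℤ, A ⊆ Icc 1 (n : ℤ) ∧
      (∃ c, ∀ a ∈ A, χ a = c) ∧ (∃ s : ℤ, A = (fun a => s - a) '' A) ∧ k ≤ A.ncard) :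
    k ≤ MSdisc n r :=
  le_csSup (bddAbove_setOf_MSdisc hr) h

theorem exists_MSdisc_le_ncard (hr : 0 < r) (χ : ℤ → Fin r) :
    ∃ A : Set ℤ, A ⊆ Icc 1 (n : ℤ) ∧ (∃ c, ∀ a ∈ A, χ a = c) ∧
      (∃ s : ℤ, A = (fun a => s - a) '' A) ∧ MSdisc n r ≤ A.ncard :=
  Nat.sSup_mem ⟨0, fun _ => ⟨∅, empty_subset _, ⟨⟨0, hr⟩, by simp⟩, ⟨0, by simp⟩, Nat.zero_le _⟩⟩
    (bddAbove_setOf_MSdisc hr) χ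

theorem msUnit_nonneg (r : ℕ) : 0 ≤ msUnit r :=
  Real.sSup_nonneg fun _ h => h.1.le

theorem exists_measure_lt_of_msUnit_lt (hr : 0 < r) {ε : ℝ} (hε : msUnit r < ε) :
    ∃ χ : ℝ → Fin r, Measurable χ ∧ ∀ A : Set ℝ, MeasurableSet A → A ⊆ Icc 0 1 →
      (∃ c, ∀ a ∈ A, χ a = c) → (∃ x : ℝ, A = (fun a => 2 * x - a) '' A) →
        volume A < ENNReal.ofReal ε := by
  by_contra! h
  have hbdd : BddAbove {ε : ℝ | 0 < ε ∧ ∀ χ : ℝ → Fin r, Measurable χ →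
      ∃ A : Set ℝ, MeasurableSet A ∧ A ⊆ Icc 0 1 ∧ (∃ c, ∀ a ∈ A, χ a = c) ∧
        (∃ x : ℝ, A = (fun a => 2 * x - a) '' A) ∧ ENNReal.ofReal ε ≤ volume A} := by
    refine ⟨1, fun ε ⟨_, hε⟩ => ?_⟩
    obtain ⟨A, -, hA, -, -, hεA⟩ := hε (fun _ => ⟨0, hr⟩) measurable_const
    have := hεA.trans (measure_mono hA)
    rwa [Real.volume_Icc, sub_zero, ENNReal.ofReal_le_ofReal_iff zero_le_one] at this
  have hpos : 0 < ε := (msUnit_nonneg r).trans_lt hε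
  exact hε.not_ge (le_csSup hbdd ⟨hpos, h⟩)

end Extremal

theorem Function.Involutive.image_image {α : Type*} {f : α → α} (hf : Function.Involutive f)
    (s : Set α) : f '' (f '' s) = s := by
  rw [Set.image_image]
  simp only [hf _, image_id']

theorem Function.Involutive.image_inter_image {α : Type*} {f : α → α}
    (hf : Function.Involutive f) (s : Set α) : f '' (s ∩ f '' s) = s ∩ f '' s := by
  rw [image_inter hf.injective, hf.image_image, inter_comm]

theorem involutive_const_sub {G : Type*} [AddCommGroup G] (c : G) :
    Function.Involutive fun t : G => c - t :=
  fun t => sub_sub_cancel c t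

theorem measure_image_const_sub {G : Type*} [MeasurableSpace G] [AddCommGroup G]
    [MeasurableAdd G] [MeasurableNeg G] (μ : Measure G) [μ.IsNegInvariant] [μ.IsAddLeftInvariant]
    (c : G) (s : Set G) : μ ((fun t => c - t) '' s) = μ s := by
  rw [(involutive_const_sub c).image_eq_preimage_symm]
  exact (Measure.measurePreserving_sub_left μ c).measure_preimage_equiv
    (f := MeasurableEquiv.subLeft c) s

/-- The index `i` of the cell `((i - 1) / n, i / n]` containing `t`. -/
noncomputable def cellIndex (n : ℕ) (t : ℝ) : ℤ := ⌈(n : ℝ) * t⌉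

section Cells

variable {n : ℕ} {t : ℝ} {i : ℤ}

theorem measurable_cellIndex (n : ℕ) : Measurable (cellIndex n) :=
  Int.measurable_ceil.comp (measurable_const_mul _)

theorem cellIndex_eq_iff (hn : 0 < n) :
    cellIndex n t = i ↔ t ∈ Ioc (((i : ℝ) - 1) / n) (i / n) := by
  have hn' : (0 : ℝ) < n := Nat.cast_pos.2 hn
  rw [cellIndex, Int.ceil_eq_iff, mem_Ioc, div_lt_iff₀ hn', le_div_iff₀ hn', mul_comm t]

theorem dist_lt_of_cellIndex_eq (hn : 0 < n) {t' : ℝ} (h : cellIndex n t = cellIndex n t') :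
    dist t t' < 1 / n := by
  have ht := (cellIndex_eq_iff (t := t) hn).1 rfl
  have ht' := (cellIndex_eq_iff hn).1 h.symm
  rw [Real.dist_eq, abs_sub_lt_iff]
  constructor <;> linarith [ht.1, ht.2, ht'.1, ht'.2, show ((cellIndex n t : ℝ) - 1) / n =
    (cellIndex n t : ℝ) / n - 1 / n by ring]

end Cells

theorem tsum_measure_inter_le_ncard_mul {ι α : Type*} [MeasurableSpace α] {μ : Measure α}
    {A : Set α} {P : ι → Set α} {b : ℝ≥0∞} (hP : ∀ i, μ (P i) ≤ b)
    (hfin : {i | μ (A ∩ P i) ≠ 0}.Finite) :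
    ∑' i, μ (A ∩ P i) ≤ {i | μ (A ∩ P i) ≠ 0}.ncard * b := by
  rw [tsum_eq_sum (s := hfin.toFinset) (by simp), ncard_eq_toFinset_card _ hfin]
  calc ∑ i ∈ hfin.toFinset, μ (A ∩ P i) ≤ ∑ _i ∈ hfin.toFinset, b :=
        Finset.sum_le_sum fun i _ => (measure_mono inter_subset_right).trans (hP i)
    _ = _ := by rw [Finset.sum_const, nsmul_eq_mul]

theorem image_setOf_measure_inter_ne_zero {ι α : Type*} [MeasurableSpace α] {μ : Measure α}
    {A : Set α} {P : ι → Set α} {f : α → α} (hf : Function.Injective f)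
    (hμf : ∀ s, μ (f '' s) = μ s) (hA : f '' A = A) {τ : ι → ι} (hτ : Function.Involutive τ)
    (hP : ∀ i, f '' P i = P (τ i)) :
    τ '' {i | μ (A ∩ P i) ≠ 0} = {i | μ (A ∩ P i) ≠ 0} := by
  have key : ∀ i, μ (A ∩ P (τ i)) = μ (A ∩ P i) := fun i => by
    rw [← hP, ← hA, ← image_inter hf, hμf, hA]
  rw [hτ.image_eq_preimage_symm]
  ext i
  simp only [mem_preimage, mem_ofPred_eq, key]

def cellPart (n : ℕ) (a b : ℝ) (i : ℤ) : Set ℝ := Ioo ((i - 1 + a) / n) ((i - 1 + b) / n)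

def heavyCellParts (A : Set ℝ) (n : ℕ) (a b : ℝ) : Set ℤ :=
  {i | volume (A ∩ cellPart n a b i) ≠ 0}

section CellParts

variable {n : ℕ} {a b t : ℝ} {i : ℤ}

theorem mem_cellPart_iff (hn : 0 < n) :
    t ∈ cellPart n a b i ↔ i - 1 + a < n * t ∧ n * t < i - 1 + b := by
  have hn' : (0 : ℝ) < n := Nat.cast_pos.2 hn
  rw [cellPart, mem_Ioo, div_lt_iff₀ hn', lt_div_iff₀ hn', mul_comm t]

theorem image_const_sub_cellPart (n : ℕ) (a b : ℝ) (k i : ℤ) :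
    (fun t => (k - 2 + a + b) / n - t) '' cellPart n a b i = cellPart n a b (k - i) := by
  rw [cellPart, cellPart, image_const_sub_Ioo]
  congr 1 <;> push_cast <;> ring

theorem volume_cellPart (n : ℕ) (a b : ℝ) (i : ℤ) :
    volume (cellPart n a b i) = ENNReal.ofReal ((b - a) / n) := by
  rw [cellPart, Real.volume_Ioo]
  congr 1
  ring

theorem cellIndex_eq_of_mem_cellPart (hn : 0 < n) (ha : 0 ≤ a) (hb : b ≤ 1)
    (ht : t ∈ cellPart n a b i) : cellIndex n t = i := by
  rw [cellIndex, Int.ceil_eq_iff]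
  have := (mem_cellPart_iff hn).1 ht
  constructor <;> linarith [this.1, this.2]

theorem mem_Icc_of_mem_cellPart (hn : 0 < n) (ha : 0 ≤ a) (hb : b ≤ 1)
    (ht : t ∈ cellPart n a b i) (ht01 : t ∈ Icc 0 1) : i ∈ Icc 1 (n : ℤ) := by
  have h := (mem_cellPart_iff hn).1 ht
  have h0 : (0 : ℝ) ≤ n * t := mul_nonneg (Nat.cast_nonneg n) ht01.1
  have h1 : (n : ℝ) * t ≤ n := mul_le_of_le_one_right (Nat.cast_nonneg n) ht01.2
  constructor
  · have : (0 : ℝ) < i := by linarith [h.2]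
    exact_mod_cast this
  · have : (i : ℝ) < n + 1 := by linarith [h.1]
    exact Int.lt_add_one_iff.1 (by exact_mod_cast this)

variable {A : Set ℝ}

theorem heavyCellParts_subset_image (hn : 0 < n) (ha : 0 ≤ a) (hb : b ≤ 1) :
    heavyCellParts A n a b ⊆ cellIndex n '' A := fun _ hi =>
  let ⟨t, htA, ht⟩ := nonempty_of_measure_ne_zero hi
  ⟨t, htA, cellIndex_eq_of_mem_cellPart hn ha hb ht⟩

theorem heavyCellParts_subset_Icc (hn : 0 < n) (ha : 0 ≤ a) (hb : b ≤ 1) (hA : A ⊆ Icc 0 1) :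
    heavyCellParts A n a b ⊆ Icc 1 (n : ℤ) := fun _ hi =>
  let ⟨_, htA, ht⟩ := nonempty_of_measure_ne_zero hi
  mem_Icc_of_mem_cellPart hn ha hb ht (hA htA)

theorem image_heavyCellParts {k : ℤ} (hA : A = (fun t => (k - 2 + a + b) / n - t) '' A) :
    (fun i => k - i) '' heavyCellParts A n a b = heavyCellParts A n a b :=
  image_setOf_measure_inter_ne_zero (involutive_const_sub _).injective (measure_image_const_sub volume _)
    hA.symm (involutive_const_sub k) (image_const_sub_cellPart n a b k)

theorem tsum_volume_inter_cellPart_le (hn : 0 < n) (ha : 0 ≤ a) (hb : b ≤ 1)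
    (hA : A ⊆ Icc 0 1) :
    ∑' i, volume (A ∩ cellPart n a b i) ≤
      (heavyCellParts A n a b).ncard * ENNReal.ofReal ((b - a) / n) :=
  tsum_measure_inter_le_ncard_mul (fun i => (volume_cellPart n a b i).le)
    ((finite_Icc _ _).subset (heavyCellParts_subset_Icc hn ha hb hA))

end CellParts

section LowerBound

variable {n : ℕ} {A : Set ℝ}

theorem volume_le_tsum_cellPart_add (hn : 0 < n) (A : Set ℝ) (θ : ℝ) :
    volume A ≤ ∑' i, volume (A ∩ cellPart n 0 θ i) + ∑' i, volume (A ∩ cellPart n θ 1 i) := by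
  have hn' : (0 : ℝ) < n := Nat.cast_pos.2 hn
  set N := range (fun j : ℤ => (j : ℝ) / n) ∪ range (fun j : ℤ => (j - 1 + θ) / n)
  have hN : volume N = 0 := ((countable_range _).union (countable_range _)).measure_zero _
  have hcover : A ⊆ ((⋃ i, A ∩ cellPart n 0 θ i) ∪ ⋃ i, A ∩ cellPart n θ 1 i) ∪ N := by
    intro t ht
    set i := ⌈(n : ℝ) * t⌉
    have hi₁ : (i : ℝ) - 1 < n * t := by linarith [Int.ceil_lt_add_one ((n : ℝ) * t)]
    have hi₂ : (n : ℝ) * t ≤ i := Int.le_ceil _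
    simp only [mem_union, mem_iUnion, mem_inter_iff, mem_cellPart_iff hn]
    rcases hi₂.lt_or_eq with hi₂ | hi₂
    · rcases lt_trichotomy ((n : ℝ) * t) (i - 1 + θ) with h | h | h
      · exact .inl (.inl ⟨i, ht, by linarith, h⟩)
      · exact .inr (.inr ⟨i, show ((i : ℝ) - 1 + θ) / n = t by rw [div_eq_iff hn'.ne']; linarith⟩)
      · exact .inl (.inr ⟨i, ht, h, by linarith⟩)
    · exact .inr (.inl ⟨i, show (i : ℝ) / n = t by rw [div_eq_iff hn'.ne']; linarith⟩)
  calc volume A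
      ≤ volume (⋃ i, A ∩ cellPart n 0 θ i) + volume (⋃ i, A ∩ cellPart n θ 1 i) + volume N :=
        (measure_mono hcover).trans
          ((measure_union_le _ _).trans (add_le_add_left (measure_union_le _ _) _))
    _ ≤ _ := by
        rw [hN, add_zero]
        exact add_le_add (measure_iUnion_le _) (measure_iUnion_le _)

theorem volume_le_max_ncard_heavyCellParts (hn : 0 < n) (hA : A ⊆ Icc 0 1) {θ : ℝ}
    (hθ₀ : 0 ≤ θ) (hθ₁ : θ ≤ 1) :
    volume A ≤ ENNReal.ofReal
      (max (heavyCellParts A n 0 θ).ncard (heavyCellParts A n θ 1).ncard / n) := by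
  set M := max (heavyCellParts A n 0 θ).ncard (heavyCellParts A n θ 1).ncard
  calc volume A
      ≤ (heavyCellParts A n 0 θ).ncard * ENNReal.ofReal ((θ - 0) / n) +
          (heavyCellParts A n θ 1).ncard * ENNReal.ofReal ((1 - θ) / n) :=
        (volume_le_tsum_cellPart_add hn A θ).trans (add_le_add
          (tsum_volume_inter_cellPart_le hn le_rfl hθ₁ hA)
          (tsum_volume_inter_cellPart_le hn hθ₀ le_rfl hA))
    _ ≤ M * ENNReal.ofReal ((θ - 0) / n) + M * ENNReal.ofReal ((1 - θ) / n) := by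
        gcongr
        exacts [le_max_left _ _, le_max_right _ _]
    _ = ENNReal.ofReal (M / n) := by
        rw [← mul_add, ← ENNReal.ofReal_add (by positivity) (by
          exact div_nonneg (sub_nonneg.2 hθ₁) (Nat.cast_nonneg n)), ← ENNReal.ofReal_natCast,
          ← ENNReal.ofReal_mul (Nat.cast_nonneg _)]
        congr 1
        ring

theorem exists_symmetric_cells_of_symmetric (hn : 0 < n) (hA : A ⊆ Icc 0 1) {σ : ℝ}
    (hσ : A = (fun t => σ - t) '' A) :
    ∃ D : Set ℤ, D ⊆ Icc 1 (n : ℤ) ∧ D ⊆ cellIndex n '' A ∧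
      (∃ s : ℤ, D = (fun i => s - i) '' D) ∧ volume A ≤ ENNReal.ofReal (D.ncard / n) := by
  have hn' : (n : ℝ) ≠ 0 := Nat.cast_ne_zero.2 hn.ne'
  set θ := Int.fract (σ * n)
  have hθ₀ : 0 ≤ θ := Int.fract_nonneg _
  have hθ₁ : θ < 1 := Int.fract_lt_one _
  -- the reflection about `σ = (⌊σ n⌋ + θ) / n` permutes the left parts and the right parts
  obtain ⟨m, hm⟩ : ∃ m : ℤ, σ = (m + θ) / n :=
    ⟨⌊σ * n⌋, by rw [eq_div_iff hn', Int.floor_add_fract]⟩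
  have hL : A = (fun t => ((m + 2 : ℤ) - 2 + 0 + θ) / n - t) '' A := by
    convert hσ using 4; rw [hm]; push_cast; ring
  have hR : A = (fun t => ((m + 1 : ℤ) - 2 + θ + 1) / n - t) '' A := by
    convert hσ using 4; rw [hm]; push_cast; ring
  have hvol := volume_le_max_ncard_heavyCellParts hn hA hθ₀ hθ₁.le
  rcases le_total (heavyCellParts A n θ 1).ncard (heavyCellParts A n 0 θ).ncard with h | h
  · exact ⟨_, heavyCellParts_subset_Icc hn le_rfl hθ₁.le hA,
      heavyCellParts_subset_image hn le_rfl hθ₁.le, ⟨_, (image_heavyCellParts hL).symm⟩,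
      by rwa [max_eq_left h] at hvol⟩
  · exact ⟨_, heavyCellParts_subset_Icc hn hθ₀ le_rfl hA,
      heavyCellParts_subset_image hn hθ₀ le_rfl, ⟨_, (image_heavyCellParts hR).symm⟩,
      by rwa [max_eq_right h] at hvol⟩

theorem msUnit_le_MSdisc_div {r : ℕ} (hr : 0 < r) (hn : 0 < n) :
    msUnit r ≤ MSdisc n r / n := by
  have hn' : (0 : ℝ) < n := Nat.cast_pos.2 hn
  refine Real.sSup_le (fun ε ⟨hε, h⟩ => ?_) (by positivity)
  suffices ⌈n * ε⌉₊ ≤ MSdisc n r by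
    rw [le_div_iff₀ hn', mul_comm]
    exact (Nat.le_ceil _).trans (by exact_mod_cast this)
  refine le_MSdisc hr fun χ => ?_
  obtain ⟨A, -, hA, ⟨c, hc⟩, ⟨x, hx⟩, hεA⟩ :=
    h (fun t => χ (cellIndex n t)) (Measurable.of_discrete.comp (measurable_cellIndex n))
  obtain ⟨D, hD, hDA, hDs, hDA'⟩ := exists_symmetric_cells_of_symmetric hn hA hx
  refine ⟨D, hD, ⟨c, fun i hi => ?_⟩, hDs, Nat.ceil_le.2 ?_⟩
  · obtain ⟨t, ht, rfl⟩ := hDA hi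
    exact hc t ht
  · have := (ENNReal.ofReal_le_ofReal_iff (by positivity)).1 (hεA.trans hDA')
    rwa [le_div_iff₀ hn', mul_comm] at this

end LowerBound

theorem MeasurableSet.exists_isCompact_isOpen_sdiff_lt {α : Type*} [MeasurableSpace α]
    [TopologicalSpace α] [OpensMeasurableSpace α] [T2Space α] {μ : Measure α} [μ.OuterRegular]
    [μ.InnerRegularCompactLTTop] {A : Set α} (hA : MeasurableSet A) (hA' : μ A ≠ ∞)
    {ε : ℝ≥0∞} (hε : ε ≠ 0) :
    ∃ K U, K ⊆ A ∧ A ⊆ U ∧ IsCompact K ∧ IsOpen U ∧ μ (U \ K) < ε := by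
  obtain ⟨U, hAU, hU, -, hUA⟩ := hA.exists_isOpen_sdiff_lt hA' (ENNReal.half_pos hε).ne'
  obtain ⟨K, hKA, hK, hAK⟩ := hA.exists_isCompact_sdiff_lt hA' (ENNReal.half_pos hε).ne'
  refine ⟨K, U, hKA, hAU, hK, hU, ?_⟩
  calc μ (U \ K) ≤ μ (U \ A ∪ A \ K) := measure_mono fun t ⟨htU, htK⟩ => by
        by_cases htA : t ∈ A
        exacts [.inr ⟨htA, htK⟩, .inl ⟨htU, htA⟩]
    _ ≤ μ (U \ A) + μ (A \ K) := measure_union_le _ _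
    _ < ε / 2 + ε / 2 := ENNReal.add_lt_add hUA hAK
    _ = ε := ENNReal.add_halves ε

theorem eventually_exists_volume_ne_cellIndex_lt {α : Type*} [Finite α] [MeasurableSpace α]
    [MeasurableSingletonClass α] {χ : ℝ → α} (hχ : Measurable χ) {S : Set ℝ}
    (hS : MeasurableSet S) (hS' : volume S ≠ ∞) {δ : ℝ≥0∞} (hδ : δ ≠ 0) :
    ∀ᶠ n in atTop, ∃ d : ℤ → α, volume {t ∈ S | χ t ≠ d (cellIndex n t)} < δ := by
  classical
  obtain ⟨ε, hε, hεδ⟩ := ENNReal.exists_pos_sum_of_countable hδ α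
  have hreg (c : α) : ∃ K U, K ⊆ χ ⁻¹' {c} ∩ S ∧ χ ⁻¹' {c} ∩ S ⊆ U ∧ IsCompact K ∧
      IsOpen U ∧ volume (U \ K) < ε c :=
    ((hχ (measurableSet_singleton c)).inter hS).exists_isCompact_isOpen_sdiff_lt
      (measure_ne_top_of_subset inter_subset_right hS') (by simpa using (hε c).ne')
  choose K U hKE hEU hK hU hUK using hreg
  choose η hη hηU using fun c => (hK c).exists_thickening_subset_open (hU c) ((hKE c).trans (hEU c))
  have hfine : ∀ᶠ n : ℕ in atTop, 0 < n ∧ ∀ c, 1 / (n : ℝ) < η c :=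
    (eventually_gt_atTop 0).and (eventually_all.2 fun c =>
      tendsto_one_div_atTop_nhds_zero_nat.eventually (gt_mem_nhds (hη c)))
  filter_upwards [hfine] with n ⟨hn, hnη⟩
  -- a cell meeting `K c` lies inside `U c`, since `1 / n < η c`
  refine ⟨fun i => if h : ∃ c, ∃ t ∈ K c, cellIndex n t = i then h.choose else χ 0, ?_⟩
  calc volume {t ∈ S | χ t ≠ _}
      ≤ volume (⋃ c, U c \ K c) := measure_mono ?_
    _ ≤ ∑' c, volume (U c \ K c) := measure_iUnion_le _
    _ ≤ ∑' c, (ε c : ℝ≥0∞) := ENNReal.tsum_le_tsum fun c => (hUK c).le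
    _ < δ := hεδ
  rintro t ⟨htS, htd⟩
  rw [mem_iUnion]
  dsimp only at htd
  split_ifs at htd with h
  · obtain ⟨t', ht'K, ht'⟩ := h.choose_spec
    refine ⟨h.choose, hηU _ (Metric.mem_thickening_iff.2 ⟨t', ht'K, ?_⟩), fun htK => htd ?_⟩
    · exact (dist_lt_of_cellIndex_eq hn ht'.symm).trans (hnη _)
    · exact (hKE _ htK).1
  · exact ⟨χ t, hEU _ ⟨rfl, htS⟩, fun htK => h ⟨χ t, t, htK, rfl⟩⟩

section UpperBound

variable {n : ℕ}

theorem volume_cellIndex_preimage (hn : 0 < n) (D : Finset ℤ) :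
    volume (cellIndex n ⁻¹' D) = D.card * ENNReal.ofReal (1 / n) := by
  rw [← sum_measure_preimage_singleton D fun i _ =>
    measurable_cellIndex n (measurableSet_singleton i)]
  have hcell (i : ℤ) : volume (cellIndex n ⁻¹' {i}) = ENNReal.ofReal (1 / n) := by
    rw [show cellIndex n ⁻¹' {i} = _ from Set.ext fun t => cellIndex_eq_iff hn, Real.volume_Ioc]
    congr 1
    ring
  simp only [hcell, Finset.sum_const, nsmul_eq_mul]

theorem volume_image_cellIndex_preimage_diff (hn : 0 < n) {D : Set ℤ} {s : ℤ}
    (hD : D = (fun i => s - i) '' D) :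
    volume ((fun t => ((s : ℝ) - 1) / n - t) '' (cellIndex n ⁻¹' D) \ cellIndex n ⁻¹' D) = 0 := by
  -- the reflection maps cell `i` into cell `s - i` together with its left endpoint
  refine measure_mono_null ?_ ((countable_range fun j : ℤ => (j : ℝ) / n).measure_zero volume)
  rintro _ ⟨⟨u, hu, rfl⟩, hnot⟩
  have hu' := (cellIndex_eq_iff (t := u) hn).1 rfl
  have hsi : s - cellIndex n u ∈ D := by
    rw [hD]
    exact mem_image_of_mem _ hu
  by_contra hrange
  have hne : (((s - cellIndex n u : ℤ) : ℝ) - 1) / n ≠ ((s : ℝ) - 1) / n - u := fun h =>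
    hrange ⟨s - cellIndex n u - 1, by push_cast at h ⊢; exact h⟩
  refine hnot (show cellIndex n (((s : ℝ) - 1) / n - u) ∈ D from
    (cellIndex_eq_iff hn).2 ⟨lt_of_le_of_ne ?_ hne, ?_⟩ ▸ hsi)
  · have : (cellIndex n u : ℝ) / n - u ≥ 0 := by linarith [hu'.2]
    push_cast
    linarith [show ((s : ℝ) - cellIndex n u - 1) / n = ((s : ℝ) - 1) / n - cellIndex n u / n
      by ring]
  · push_cast
    linarith [hu'.1, show ((s : ℝ) - cellIndex n u) / n = ((s : ℝ) - 1) / n -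
      ((cellIndex n u : ℝ) - 1) / n by ring]

theorem volume_le_volume_inter_image_add (c : ℝ) (S U : Set ℝ)
    (hU : volume ((fun t => c - t) '' U \ U) = 0) :
    volume U ≤ volume (S ∩ (fun t => c - t) '' S) + 2 * volume (U \ S) := by
  set ρ := fun t : ℝ => c - t
  have hρ : Function.Involutive ρ := involutive_const_sub c
  have hUρS : volume (U \ ρ '' S) ≤ volume (U \ S) :=
    calc volume (U \ ρ '' S) = volume (ρ '' U \ S) := by
          rw [← measure_image_const_sub volume c, image_sdiff hρ.injective, hρ.image_image]
      _ ≤ volume (U \ S ∪ (ρ '' U \ U)) := measure_mono fun t ⟨htU, htS⟩ => by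
          by_cases ht : t ∈ U
          exacts [.inl ⟨ht, htS⟩, .inr ⟨htU, ht⟩]
      _ ≤ volume (U \ S) := (measure_union_le _ _).trans (by rw [hU, add_zero])
  calc volume U ≤ volume (S ∩ ρ '' S ∪ U \ S ∪ U \ ρ '' S) := measure_mono fun t ht => by
        by_cases hS : t ∈ S <;> by_cases hρS : t ∈ ρ '' S
        exacts [.inl (.inl ⟨hS, hρS⟩), .inr ⟨ht, hρS⟩, .inl (.inr ⟨ht, hS⟩), .inl (.inr ⟨ht, hS⟩)]
    _ ≤ volume (S ∩ ρ '' S) + volume (U \ S) + volume (U \ ρ '' S) :=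
        (measure_union_le _ _).trans (add_le_add_left (measure_union_le _ _) _)
    _ ≤ volume (S ∩ ρ '' S) + 2 * volume (U \ S) := by
        rw [two_mul, ← add_assoc]
        exact add_le_add_right hUρS _

theorem exists_symmetric_mono_of_cellIndex {r : ℕ} (hr : 0 < r) (hn : 0 < n) {χ : ℝ → Fin r}
    (hχ : Measurable χ) (d : ℤ → Fin r) :
    ∃ A : Set ℝ, MeasurableSet A ∧ A ⊆ Icc 0 1 ∧ (∃ c, ∀ a ∈ A, χ a = c) ∧
      (∃ x : ℝ, A = (fun a => 2 * x - a) '' A) ∧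
      ENNReal.ofReal (MSdisc n r / n) ≤
        volume A + 2 * volume {t ∈ Icc 0 1 | χ t ≠ d (cellIndex n t)} := by
  have hn' : (0 : ℝ) < n := Nat.cast_pos.2 hn
  obtain ⟨D, hD, ⟨c, hc⟩, ⟨s, hs⟩, hMS⟩ := exists_MSdisc_le_ncard (n := n) hr d
  have hDfin : D.Finite := (finite_Icc _ _).subset hD
  set U := cellIndex n ⁻¹' D
  set S := U ∩ χ ⁻¹' {c}
  set ρ := fun t : ℝ => ((s : ℝ) - 1) / n - t
  have hU : U ⊆ Icc 0 1 := fun t ht => by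
    have ht' := (cellIndex_eq_iff (t := t) hn).1 rfl
    have hi : (1 : ℝ) ≤ cellIndex n t ∧ (cellIndex n t : ℝ) ≤ n := by exact_mod_cast hD ht
    constructor
    · linarith [ht'.1, div_nonneg (sub_nonneg.2 hi.1) hn'.le]
    · linarith [ht'.2, (div_le_one hn').2 hi.2]
  have hS : MeasurableSet S :=
    (measurable_cellIndex n MeasurableSet.of_discrete).inter (hχ (measurableSet_singleton c))
  have hρS : MeasurableSet (ρ '' S) := by
    rw [(involutive_const_sub _).image_eq_preimage_symm]
    exact hS.preimage (measurable_const.sub measurable_id)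
  refine ⟨S ∩ ρ '' S, hS.inter hρS, fun t ht => hU ht.1.1, ⟨c, fun t ht => ht.1.2⟩,
    ⟨((s : ℝ) - 1) / n / 2, ?_⟩, ?_⟩
  · rw [show 2 * (((s : ℝ) - 1) / n / 2) = ((s : ℝ) - 1) / n by ring]
    exact ((involutive_const_sub _).image_inter_image S).symm
  have hUS : U \ S ⊆ {t ∈ Icc 0 1 | χ t ≠ d (cellIndex n t)} := fun t ⟨ht, htS⟩ =>
    ⟨hU ht, fun h => htS ⟨ht, by rw [mem_preimage, mem_singleton_iff, h, hc _ ht]⟩⟩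
  calc ENNReal.ofReal (MSdisc n r / n)
      ≤ volume U := by
        rw [show U = cellIndex n ⁻¹' hDfin.toFinset by simp [U], volume_cellIndex_preimage hn,
          ← ENNReal.ofReal_natCast, ← ENNReal.ofReal_mul (Nat.cast_nonneg _), mul_one_div,
          ← ncard_eq_toFinset_card D hDfin]
        gcongr
    _ ≤ volume (S ∩ ρ '' S) + 2 * volume (U \ S) :=
        volume_le_volume_inter_image_add _ S U (volume_image_cellIndex_preimage_diff hn hs)
    _ ≤ _ := by gcongr

theorem eventually_MSdisc_div_le {r : ℕ} (hr : 0 < r) {δ : ℝ} (hδ : 0 < δ) :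
    ∀ᶠ n : ℕ in atTop, (MSdisc n r : ℝ) / n ≤ msUnit r + δ := by
  have hms := msUnit_nonneg r
  obtain ⟨χ, hχ, hsmall⟩ := exists_measure_lt_of_msUnit_lt hr (ε := msUnit r + δ / 2)
    (by linarith)
  filter_upwards [eventually_exists_volume_ne_cellIndex_lt hχ (S := Icc 0 1) measurableSet_Icc
    (by simp) (δ := ENNReal.ofReal (δ / 4)) (by simpa using hδ), eventually_gt_atTop 0]
    with n ⟨d, hd⟩ hn
  obtain ⟨A, hAm, hA, hAc, hAs, hle⟩ := exists_symmetric_mono_of_cellIndex hr hn hχ d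
  refine (ENNReal.ofReal_le_ofReal_iff (by linarith)).1 (hle.trans ?_)
  calc volume A + 2 * volume {t ∈ Icc 0 1 | χ t ≠ d (cellIndex n t)}
      ≤ ENNReal.ofReal (msUnit r + δ / 2) + 2 * ENNReal.ofReal (δ / 4) :=
        add_le_add (hsmall A hAm hA hAc hAs).le (by gcongr)
    _ = ENNReal.ofReal (msUnit r + δ) := by
        rw [← ENNReal.ofReal_ofNat 2, ← ENNReal.ofReal_mul zero_le_two,
          ← ENNReal.ofReal_add (by linarith) (by positivity)]
        ring_nf

end UpperBound

/-- ms([n], r) converges to ms([0,1], r), which is also its infimum over n. -/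
theorem stmt_18 (r : ℕ) (hr : 0 < r) :
    Tendsto (fun n : ℕ => (MSdisc (n + 1) r : ℝ) / (n + 1)) atTop (nhds (msUnit r)) ∧
      (⨅ n : ℕ, (MSdisc (n + 1) r : ℝ) / (n + 1)) = msUnit r := by
  have hlow (n : ℕ) : msUnit r ≤ (MSdisc (n + 1) r : ℝ) / (n + 1) := by
    exact_mod_cast msUnit_le_MSdisc_div hr n.succ_pos
  have hup (δ : ℝ) (hδ : 0 < δ) :
      ∀ᶠ n : ℕ in atTop, (MSdisc (n + 1) r : ℝ) / (n + 1) ≤ msUnit r + δ :=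
    (tendsto_add_atTop_nat 1).eventually (eventually_MSdisc_div_le hr hδ) |>.mono
      fun n h => by exact_mod_cast h
  have hlim : Tendsto (fun n : ℕ => (MSdisc (n + 1) r : ℝ) / (n + 1)) atTop (nhds (msUnit r)) :=
    tendsto_order.2 ⟨fun a ha => .of_forall fun n => ha.trans_le (hlow n), fun a ha =>
      (hup ((a - msUnit r) / 2) (by linarith)).mono fun n hn => by linarith⟩
  exact ⟨hlim, le_antisymm (ge_of_tendsto' hlim fun n => ciInf_le ⟨_, forall_mem_range.2 hlow⟩ n)
    (le_ciInf hlow)⟩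
end
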